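/- arXiv:1805.01797 — 9 statements merged into one kernel-verified Lean document; each statement's English description precedes it below -/
import Mathlib

section
/- For m < n positive integers, the number of segmented permutations of size n with exactly n−m−1 descents equals the number of segmented permutations of size n for which the number of descents plus the number of bars equals m. -/
open Finset

/-- A segmented permutation of size `n`: a permutation of `Fin n` together with a
set of barred gaps among the `n-1` gaps between consecutive positions. -/
abbrev SegPerm (n : ℕ) := Equiv.Perm (Fin n) × Finset (Fin (n - 1))

/-- The left endpoint of gap `i`, as an element of `Fin n`. -/
def gapL {n : ℕ} (i : Fin (n - 1)) : Fin n := ⟨i.1, by have := i.2; omega⟩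

/-- The right endpoint of gap `i`, as an element of `Fin n`. -/
def gapR {n : ℕ} (i : Fin (n - 1)) : Fin n := ⟨i.1 + 1, by have := i.2; omega⟩

/-- Number of descents of a segmented permutation: gaps that are not barred and
where the value decreases. -/
def desNum {n : ℕ} (π : SegPerm n) : ℕ :=
  (univ.filter (fun i : Fin (n - 1) => i ∉ π.2 ∧ π.1 (gapR i) < π.1 (gapL i))).card

/-- Number of bars of a segmented permutation. -/
def segNum {n : ℕ} (π : SegPerm n) : ℕ := π.2.card

/-- Number of descents of an ordinary permutation. -/
def permDes {n : ℕ} (σ : Equiv.Perm (Fin n)) : ℕ :=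
  (univ.filter (fun i : Fin (n - 1) => σ (gapR i) < σ (gapL i))).card

/-- The Eulerian number `A(n,k)`. -/
def eulerian (n k : ℕ) : ℕ :=
  ((univ : Finset (Equiv.Perm (Fin n))).filter (fun σ => permDes σ = k)).card

/-- `K(n,i,j)`: number of segmented permutations of size `n` with `i` descents
and `j` bars. -/
def Knum (n i j : ℕ) : ℕ :=
  ((univ : Finset (SegPerm n)).filter (fun π => desNum π = i ∧ segNum π = j)).card

/-- `K(n,i,j)` with integer indices; it vanishes for negative indices. -/
def Kint (n : ℕ) (i j : ℤ) : ℤ :=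
  (((univ : Finset (SegPerm n)).filter
      (fun π => (desNum π : ℤ) = i ∧ (segNum π : ℤ) = j)).card : ℤ)

/-- `T(n,k)`: number of segmented permutations of size `n` with `k` descents. -/
def Tnum (n k : ℕ) : ℕ :=
  ((univ : Finset (SegPerm n)).filter (fun π => desNum π = k)).card

/-- `T(n,k)` with an integer index; it vanishes for negative indices. -/
def Tint (n : ℕ) (k : ℤ) : ℤ :=
  (((univ : Finset (SegPerm n)).filter (fun π => (desNum π : ℤ) = k)).card : ℤ)

/-- Stirling numbers of the second kind. -/
def stirling : ℕ → ℕ → ℕ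
  | 0, 0 => 1
  | 0, _ + 1 => 0
  | _ + 1, 0 => 0
  | n + 1, k + 1 => (k + 1) * stirling n (k + 1) + stirling n k

/-- The generalized Eulerian polynomial `α_n(t,q)`, as a function of real arguments. -/
noncomputable def alphaF (n : ℕ) (t q : ℝ) : ℝ :=
  ∑ π : SegPerm n, t ^ desNum π * q ^ segNum π

/-- Reverse the values of the permutation, keep the bars. -/
def segFlip {n : ℕ} (π : SegPerm n) : SegPerm n := (π.1.trans Fin.revPerm, π.2)

lemma segFlip_segFlip {n : ℕ} (π : SegPerm n) : segFlip (segFlip π) = π := by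
  unfold segFlip
  ext x
  · simp [Fin.rev_rev]
  · simp

lemma segNum_segFlip {n : ℕ} (π : SegPerm n) : segNum (segFlip π) = segNum π := rfl

lemma desNum_segFlip {n : ℕ} (π : SegPerm n) :
    desNum (segFlip π) + desNum π + segNum π = n - 1 := by
  classical
  have hne : ∀ i : Fin (n - 1), π.1 (gapL i) ≠ π.1 (gapR i) := by
    intro i h
    have := π.1.injective h
    simp [gapL, gapR, Fin.ext_iff] at this
  have h1 : desNum (segFlip π)
      = ((univ.filter (fun i : Fin (n-1) => i ∉ π.2)).filter
          (fun i => π.1 (gapL i) < π.1 (gapR i))).card := by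
    unfold desNum segFlip
    rw [Finset.filter_filter]
    congr 1
    apply Finset.filter_congr
    intro i _
    simp [Fin.rev_lt_rev]
  have h2 : desNum π
      = ((univ.filter (fun i : Fin (n-1) => i ∉ π.2)).filter
          (fun i => ¬ (π.1 (gapL i) < π.1 (gapR i)))).card := by
    unfold desNum
    rw [Finset.filter_filter]
    congr 1
    apply Finset.filter_congr
    intro i _
    constructor
    · intro ⟨h, h'⟩
      exact ⟨h, by simpa using le_of_lt h'⟩
    · intro ⟨h, h'⟩
      refine ⟨h, ?_⟩
      rcases (hne i).lt_or_gt with hl | hl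
      · exact absurd hl (by simpa using h')
      · exact hl
  rw [h1, h2, Finset.card_filter_add_card_filter_not]
  unfold segNum
  have := Finset.card_filter_add_card_filter_not
    (s := (univ : Finset (Fin (n-1)))) (p := fun i => i ∉ π.2)
  simp only [not_not] at this
  rw [show (Finset.filter (fun a => a ∈ π.2) univ) = π.2 from by ext a; simp] at this
  simp only [Finset.card_univ, Fintype.card_fin] at this
  omega

/-- `T(n, n-m-1)` counts segmented permutations with `des + seg = m`. -/
theorem Tnum_mirror (m n : ℕ) (hm : 0 < m) (hmn : m < n) :
    Tnum n (n - m - 1)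
      = ((univ : Finset (SegPerm n)).filter (fun π => desNum π + segNum π = m)).card := by
  classical
  unfold Tnum
  apply Finset.card_bij' (fun π _ => segFlip π) (fun π _ => segFlip π)
  · intro π hπ
    simp only [Finset.mem_filter, Finset.mem_univ, true_and] at hπ ⊢
    have := desNum_segFlip π
    rw [segNum_segFlip]
    omega
  · intro π hπ
    simp only [Finset.mem_filter, Finset.mem_univ, true_and] at hπ ⊢
    have := desNum_segFlip π
    omega
  · intro π _; exact segFlip_segFlip π
  · intro π _; exact segFlip_segFlip π
end

section
/- For n > 0 and 0 ≤ i + j < n, the numbers K(n,i,j) satisfy the recurrence K(n,i,j) = (i+j+1)[K(n−1,i,j) + K(n−1,i,j−1)] + (n−i−j)[K(n−1,i−1,j) + K(n−1,i−1,j−1)], with the convention K(m,a,b) = 0 when a < 0, b < 0, or a + b ≥ m. -/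
open Finset

/-!
Every segmented permutation of size `m + 2` arises exactly once from one of size `m + 1` by
inserting the maximal value at some position `p` and deciding whether the gap next to it is barred.
The bar bit raises the number of bars by `b ∈ {0, 1}`. The insertion raises the number of descents
by at most one: it creates a descent precisely at the front when that gap stays unbarred, and inside
a gap that was an unbarred ascent. So if the smaller permutation has `d` descents and `s` bars, then
`d + s + 1 + b` positions keep `d` descents and the other `m + 1 - d - s - b` raise it to `d + 1`;
with `(d, s + b) = (i, j)`, resp. `(i - 1, j)`, these counts are `i + j + 1`, resp. `m + 2 - i - j`.
-/

theorem Fin.val_succAbove_eq_ite {n : ℕ} (p : Fin (n + 1)) (k : Fin n) :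
    (p.succAbove k).1 = if k.1 < p.1 then k.1 else k.1 + 1 := by
  simp only [Fin.succAbove, Fin.lt_def, Fin.val_castSucc]
  split_ifs <;> rfl

theorem sum_ite_add_eq_of_le_one {ι : Type*} [Fintype ι] (δ : ι → ℕ)
    (hδ : ∀ x, δ x ≤ 1) (d : ℕ) (i : ℤ) :
    (∑ x, if ((d + δ x : ℕ) : ℤ) = i then 1 else 0 : ℤ)
      = (if (d : ℤ) = i then Fintype.card ι - ∑ x, (δ x : ℤ) else 0)
        + (if (d : ℤ) + 1 = i then ∑ x, (δ x : ℤ) else 0) := by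
  have key : ∀ x, (if ((d + δ x : ℕ) : ℤ) = i then 1 else 0 : ℤ)
      = (if (d : ℤ) = i then 1 - (δ x : ℤ) else 0)
        + (if (d : ℤ) + 1 = i then (δ x : ℤ) else 0) := by
    intro x
    have := hδ x
    split_ifs <;> push_cast at * <;> omega
  simp only [key, sum_add_distrib]
  congr 1 <;> split_ifs <;> simp [sum_sub_distrib]

namespace Equiv.Perm

variable {m : ℕ}

def insertMax (τ : Perm (Fin (m + 1))) (p : Fin (m + 2)) : Perm (Fin (m + 2)) :=
  ((finSuccEquiv' p).trans τ.optionCongr).trans (finSuccEquiv' (Fin.last (m + 1))).symm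

@[simp]
lemma insertMax_self (τ : Perm (Fin (m + 1))) (p : Fin (m + 2)) :
    τ.insertMax p p = Fin.last (m + 1) := by
  simp [insertMax]

@[simp]
lemma insertMax_succAbove (τ : Perm (Fin (m + 1))) (p : Fin (m + 2)) (k : Fin (m + 1)) :
    τ.insertMax p (p.succAbove k) = (τ k).castSucc := by
  simp [insertMax, Fin.succAbove_last]

lemma insertMax_lt_last (τ : Perm (Fin (m + 1))) {p k : Fin (m + 2)} (hk : k ≠ p) :
    τ.insertMax p k < Fin.last (m + 1) := by
  obtain ⟨k, rfl⟩ := Fin.exists_succAbove_eq hk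
  simp [Fin.castSucc_lt_last]

end Equiv.Perm

namespace SegPerm

open Equiv.Perm

variable {m : ℕ}

/-- The gap receiving the new bar bit when the maximum is inserted at position `p`: the gap to
the left of `p`, or gap `0` when `p = 0`. The old gaps then sit at `(gapAt p).succAbove h`. -/
def gapAt (p : Fin (m + 2)) : Fin (m + 1) := ⟨p.1 - 1, by omega⟩

lemma val_gapAt_succAbove (p : Fin (m + 2)) (h : Fin m) :
    ((gapAt p).succAbove h).1 = if h.1 + 1 < p.1 then h.1 else h.1 + 1 := by
  simp only [Fin.val_succAbove_eq_ite, gapAt]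
  split_ifs <;> omega

lemma insertMax_desc_gapAt (τ : Equiv.Perm (Fin (m + 1))) (p : Fin (m + 2)) :
    τ.insertMax p (gapR (gapAt p)) < τ.insertMax p (gapL (gapAt p)) ↔ p = 0 := by
  by_cases hp : p = 0
  · have hL : gapL (gapAt p) = p := Fin.ext (by simp [gapL, gapAt, hp])
    have hR : gapR (gapAt p) ≠ p := fun h => by simpa [gapR, gapAt, hp] using congrArg Fin.val h
    rw [hL, insertMax_self]
    exact iff_of_true (insertMax_lt_last τ hR) hp
  · have hR : gapR (gapAt p) = p := Fin.ext (by
      have : p.1 ≠ 0 := fun e => hp (Fin.ext e)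
      simp only [gapR, gapAt]; omega)
    rw [hR, insertMax_self]
    exact iff_of_false (Fin.le_last _).not_gt hp

lemma insertMax_desc_succAbove (τ : Equiv.Perm (Fin (m + 1))) (p : Fin (m + 2)) (h : Fin m) :
    τ.insertMax p (gapR ((gapAt p).succAbove h)) < τ.insertMax p (gapL ((gapAt p).succAbove h))
      ↔ h.castSucc.succ = p ∨ τ (gapR h) < τ (gapL h) := by
  have hval := val_gapAt_succAbove p h
  by_cases hp : h.castSucc.succ = p
  · have hp' : h.1 + 1 = p.1 := by simp [← hp]
    have hL : gapL ((gapAt p).succAbove h) = p := Fin.ext (by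
      simp only [gapL, hval]; split_ifs <;> omega)
    have hR : gapR ((gapAt p).succAbove h) ≠ p := fun e => by
      have := congrArg Fin.val e
      simp only [gapR, hval] at this
      split_ifs at this <;> omega
    rw [hL, insertMax_self]
    exact iff_of_true (insertMax_lt_last τ hR) (Or.inl hp)
  · have hp' : h.1 + 1 ≠ p.1 := fun e => hp (Fin.ext (by simp [e]))
    have hL : gapL ((gapAt p).succAbove h) = p.succAbove (gapL h) := Fin.ext (by
      simp only [gapL, hval, Fin.val_succAbove_eq_ite]; split_ifs <;> omega)
    have hR : gapR ((gapAt p).succAbove h) = p.succAbove (gapR h) := Fin.ext (by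
      simp only [gapR, hval, Fin.val_succAbove_eq_ite]; split_ifs <;> omega)
    simp [hL, hR, hp]

def insertBar (g : Fin (m + 1)) (b : Bool) (S : Finset (Fin m)) : Finset (Fin (m + 1)) :=
  (if b then {g} else ∅) ∪ S.map g.succAboveEmb

@[simp]
lemma mem_insertBar_self (g : Fin (m + 1)) (b : Bool) (S : Finset (Fin m)) :
    g ∈ insertBar g b S ↔ b = true := by
  cases b <;> simp [insertBar, Fin.succAbove_ne]

@[simp]
lemma succAbove_mem_insertBar (g : Fin (m + 1)) (b : Bool) (S : Finset (Fin m)) (h : Fin m) :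
    g.succAbove h ∈ insertBar g b S ↔ h ∈ S := by
  cases b <;> simp [insertBar, Fin.succAbove_ne]

lemma card_insertBar (g : Fin (m + 1)) (b : Bool) (S : Finset (Fin m)) :
    (insertBar g b S).card = S.card + b.toNat := by
  cases b
  · simp [insertBar]
  · rw [insertBar, if_pos rfl, card_union_of_disjoint (by simp [Fin.succAbove_ne])]
    simp [add_comm]

def insertMax (z : SegPerm (m + 1)) (b : Bool) (p : Fin (m + 2)) : SegPerm (m + 2) :=
  (z.1.insertMax p, insertBar (gapAt p) b z.2)

lemma segNum_insertMax (z : SegPerm (m + 1)) (b : Bool) (p : Fin (m + 2)) :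
    segNum (z.insertMax b p) = segNum z + b.toNat :=
  card_insertBar _ _ _

lemma insertMax_injective :
    Function.Injective fun x : SegPerm (m + 1) × Bool × Fin (m + 2) =>
      x.1.insertMax x.2.1 x.2.2 := by
  rintro ⟨⟨τ, S⟩, b, p⟩ ⟨⟨τ', S'⟩, b', p'⟩ he
  simp only [insertMax, Prod.mk.injEq] at he
  obtain ⟨hτ, hS⟩ := he
  obtain rfl : p = p' := (τ.insertMax p).injective <| by
    rw [insertMax_self, hτ, insertMax_self]
  obtain rfl : τ = τ' := Equiv.ext fun k => Fin.castSucc_injective _ <| by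
    rw [← insertMax_succAbove, hτ, insertMax_succAbove]
  obtain rfl : b = b' := Bool.eq_iff_iff.2 <| by
    rw [← mem_insertBar_self (gapAt p) b S, hS, mem_insertBar_self]
  obtain rfl : S = S' := Finset.ext fun h => by
    rw [← succAbove_mem_insertBar (gapAt p) b, hS, succAbove_mem_insertBar]
  rfl

lemma insertMax_bijective :
    Function.Bijective fun x : SegPerm (m + 1) × Bool × Fin (m + 2) =>
      x.1.insertMax x.2.1 x.2.2 := by
  refine (Fintype.bijective_iff_injective_and_card _).2 ⟨insertMax_injective, ?_⟩
  simp only [Fintype.card_prod, Fintype.card_perm, Fintype.card_finset, Fintype.card_bool,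
    Fintype.card_fin, Nat.add_sub_cancel, Nat.add_succ_sub_one, Nat.factorial_succ (m + 1),
    pow_succ]
  ring

def freeAscNum {n : ℕ} (π : SegPerm n) : ℕ :=
  (univ.filter fun g : Fin (n - 1) => g ∉ π.2 ∧ ¬π.1 (gapR g) < π.1 (gapL g)).card

lemma desNum_add_segNum_add_freeAscNum {n : ℕ} (π : SegPerm n) :
    desNum π + segNum π + freeAscNum π = n - 1 := by
  have hS : segNum π = (univ.filter (· ∈ π.2)).card := by simp [segNum]
  have hdes := card_filter_add_card_filter_not (s := univ.filter (· ∉ π.2))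
    (fun g => π.1 (gapR g) < π.1 (gapL g))
  have hbar := card_filter_add_card_filter_not (s := (univ : Finset (Fin (n - 1)))) (· ∈ π.2)
  simp only [filter_filter] at hdes
  rw [add_right_comm, desNum, freeAscNum, hdes, hS, add_comm, hbar, card_univ, Fintype.card_fin]

def descGain (z : SegPerm (m + 1)) (b : Bool) (p : Fin (m + 2)) : ℕ :=
  (if p = 0 ∧ b = false then 1 else 0) +
    (univ.filter fun h : Fin m =>
      (h ∉ z.2 ∧ ¬z.1 (gapR h) < z.1 (gapL h)) ∧ h.castSucc.succ = p).card

lemma desNum_insertMax (z : SegPerm (m + 1)) (b : Bool) (p : Fin (m + 2)) :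
    desNum (z.insertMax b p) = desNum z + descGain z b p := by
  have hdes : desNum (z.insertMax b p) = ∑ g : Fin (m + 1),
      if g ∉ insertBar (gapAt p) b z.2 ∧ z.1.insertMax p (gapR g) < z.1.insertMax p (gapL g)
      then 1 else 0 := card_filter _ _
  have hz : desNum z = ∑ h : Fin m, if h ∉ z.2 ∧ z.1 (gapR h) < z.1 (gapL h) then 1 else 0 :=
    card_filter _ _
  rw [hdes, hz, descGain, card_filter, Fin.sum_univ_succAbove _ (gapAt p)]
  simp only [mem_insertBar_self, succAbove_mem_insertBar, insertMax_desc_gapAt,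
    insertMax_desc_succAbove]
  rw [add_left_comm, ← sum_add_distrib]
  congr 1
  · simp [and_comm]
  · refine sum_congr rfl fun h _ => ?_
    split_ifs <;> tauto

lemma descGain_le_one (z : SegPerm (m + 1)) (b : Bool) (p : Fin (m + 2)) :
    descGain z b p ≤ 1 := by
  rw [descGain]
  split_ifs with hp
  · simp [hp.1, Fin.succ_ne_zero]
  · refine (zero_add _).trans_le (card_le_one.2 fun h hh h' hh' => ?_)
    simp only [mem_filter, mem_univ, true_and] at hh hh'
    exact Fin.castSucc_injective _ (Fin.succ_injective _ (hh.2.trans hh'.2.symm))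

lemma sum_descGain (z : SegPerm (m + 1)) (b : Bool) :
    ∑ p, descGain z b p = (!b).toNat + freeAscNum z := by
  have hfree : freeAscNum z =
      (univ.filter fun h : Fin m => h ∉ z.2 ∧ ¬z.1 (gapR h) < z.1 (gapL h)).card := rfl
  rw [hfree, card_eq_sum_card_fiberwise (f := fun h : Fin m => h.castSucc.succ) (t := univ)
    (fun _ _ => mem_univ _)]
  simp only [descGain, sum_add_distrib, filter_filter]
  congr 1
  cases b <;> simp

lemma sum_boole_insertMax (z : SegPerm (m + 1)) (b : Bool) (i j : ℤ) :
    (∑ p, if (desNum (z.insertMax b p) : ℤ) = i ∧ (segNum (z.insertMax b p) : ℤ) = j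
      then 1 else 0 : ℤ)
      = (if (desNum z : ℤ) = i ∧ (segNum z : ℤ) = j - b.toNat then i + j + 1 else 0)
        + (if (desNum z : ℤ) = i - 1 ∧ (segNum z : ℤ) = j - b.toNat
          then (m + 2 : ℤ) - i - j else 0) := by
  simp only [desNum_insertMax, segNum_insertMax]
  by_cases hj : (segNum z : ℤ) = j - b.toNat
  · have hj' : ((segNum z + b.toNat : ℕ) : ℤ) = j := by push_cast; omega
    simp only [hj', hj, and_true]
    rw [sum_ite_add_eq_of_le_one _ (descGain_le_one z b), Fintype.card_fin, ← Nat.cast_sum,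
      sum_descGain]
    have hcount := desNum_add_segNum_add_freeAscNum z
    have hb : b.toNat + (!b).toNat = 1 := by cases b <;> rfl
    split_ifs <;> push_cast <;> omega
  · have hj' : (segNum z : ℤ) + b.toNat ≠ j := by omega
    simp [hj', hj]

end SegPerm

lemma Kint_eq_sum (n : ℕ) (i j : ℤ) :
    Kint n i j =
      ∑ π : SegPerm n, if (desNum π : ℤ) = i ∧ (segNum π : ℤ) = j then 1 else 0 :=
  natCast_card_filter _ _

theorem Kint_add_two (m : ℕ) (i j : ℤ) :
    Kint (m + 2) i j
      = (i + j + 1) * (Kint (m + 1) i j + Kint (m + 1) i (j - 1))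
        + ((m + 2 : ℤ) - i - j) * (Kint (m + 1) (i - 1) j + Kint (m + 1) (i - 1) (j - 1)) := by
  have hbar : ∀ b : Bool, (∑ z : SegPerm (m + 1), ∑ p,
      if (desNum (z.insertMax b p) : ℤ) = i ∧ (segNum (z.insertMax b p) : ℤ) = j
      then 1 else 0 : ℤ)
      = (i + j + 1) * Kint (m + 1) i (j - b.toNat)
        + ((m + 2 : ℤ) - i - j) * Kint (m + 1) (i - 1) (j - b.toNat) := by
    intro b
    simp only [SegPerm.sum_boole_insertMax, sum_add_distrib, Kint_eq_sum, mul_sum, mul_ite,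
      mul_one, mul_zero]
  rw [Kint_eq_sum, ← SegPerm.insertMax_bijective.sum_comp, Fintype.sum_prod_type]
  simp only [Fintype.sum_prod_type (α₁ := Bool)]
  rw [Finset.sum_comm, Fintype.sum_bool, hbar, hbar]
  simp only [Bool.toNat_true, Bool.toNat_false, Nat.cast_one, Nat.cast_zero, sub_zero]
  ring

theorem Kint_rec_n_general (n : ℕ) (i j : ℤ) (hi : 0 ≤ i) (hj : 0 ≤ j)
    (hij : i + j < n) :
    Kint n i j
      = (i + j + 1) * (Kint (n - 1) i j + Kint (n - 1) i (j - 1))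
        + ((n : ℤ) - i - j) * (Kint (n - 1) (i - 1) j + Kint (n - 1) (i - 1) (j - 1)) := by
  rcases n with _ | _ | m
  · omega
  · obtain ⟨rfl, rfl⟩ : i = 0 ∧ j = 0 := by omega
    decide
  · rw [Kint_add_two]
    push_cast
    ring

/-- the recurrence on `n` for the numbers `K(n,i,j)` (with the
convention that `K` vanishes for negative indices, which holds by definition of
`Kint`, as does the vanishing for `i + j ≥ n`). -/
theorem Kint_rec_n (n : ℕ) (i j : ℤ) (hn : 0 < n) (hi : 0 ≤ i) (hj : 0 ≤ j)
    (hij : i + j < n) :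
    Kint n i j
      = (i + j + 1) * (Kint (n - 1) i j + Kint (n - 1) i (j - 1))
        + ((n : ℤ) - i - j) * (Kint (n - 1) (i - 1) j + Kint (n - 1) (i - 1) (j - 1)) :=
  Kint_rec_n_general n i j hi hj hij
end

section
/- For n > 0, j > 0, and i + j < n, the numbers K(n,i,j) satisfy j·K(n,i,j) = (n−i−j)·K(n,i,j−1) + (i+1)·K(n,i+1,j−1). -/
open Finset

/-!
Double counting of segmented permutations with a marked bar. Erasing the marked bar `g` of
`(σ, T)` keeps the number of descents if `σ` ascends at `g` and raises it by one if `σ`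
descends there. Conversely, a segmented permutation with `i` descents and `j - 1` bars has
`n - i - j` unbarred ascents and `i` unbarred descents at which a bar may be inserted. For a
fixed `σ` with descent set `D`, the descent number of `(σ, T)` is `#(D \ T)`, so the count
takes place among subsets of a finite set.
-/

lemma card_sdiff_eq_card_sdiff_insert_add {α : Type*} [DecidableEq α] {D T : Finset α} {g : α}
    (hg : g ∉ T) :
    #(D \ T) = #(D \ insert g T) + if g ∈ D then 1 else 0 := by
  rw [sdiff_insert]
  split_ifs with hgD
  · exact (card_erase_add_one (mem_sdiff.2 ⟨hgD, hg⟩)).symm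
  · rw [erase_eq_of_notMem (fun h => hgD (mem_sdiff.1 h).1), add_zero]

section BarSets

variable {α : Type*} [Fintype α] [DecidableEq α]

/-- When `D` is the descent set of `σ`, these are the bar sets `T` for which `(σ, T)` has `a`
descents and `b` bars. -/
def barSets (D : Finset α) (a b : ℕ) : Finset (Finset α) :=
  {T | #(D \ T) = a ∧ #T = b}

lemma mem_barSets_insert_iff {D T : Finset α} {g : α} (hg : g ∉ T) {a b : ℕ} :
    insert g T ∈ barSets D a (b + 1) ↔
      T ∈ barSets D (a + if g ∈ D then 1 else 0) b := by
  simp only [barSets, mem_filter, mem_univ, true_and, card_insert_of_notMem hg,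
    card_sdiff_eq_card_sdiff_insert_add (D := D) hg, Nat.add_right_cancel_iff]

lemma card_sigma_barSets_succ (D : Finset α) (a b : ℕ) :
    #((barSets D a (b + 1)).sigma fun T => T) =
      #((barSets D a b).sigma (fun T => (D ∪ T)ᶜ) ∪ (barSets D (a + 1) b).sigma (D \ ·)) := by
  refine card_nbij' (fun x => ⟨x.1.erase x.2, x.2⟩) (fun x => ⟨insert x.2 x.1, x.2⟩)
    ?_ ?_ ?_ ?_
  · rintro ⟨T, g⟩ hx
    simp only [coe_sigma, Set.mem_sigma_iff, mem_coe] at hx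
    obtain ⟨hT, hg⟩ := hx
    rw [← insert_erase hg, mem_barSets_insert_iff (notMem_erase g T)] at hT
    by_cases hgD : g ∈ D <;> simp_all
  · rintro ⟨T, g⟩ hx
    simp only [coe_union, coe_sigma, Set.mem_union, Set.mem_sigma_iff, mem_coe, mem_compl,
      mem_union, not_or, mem_sdiff] at hx
    simp only [coe_sigma, Set.mem_sigma_iff, mem_coe, mem_insert_self, and_true]
    rcases hx with ⟨hT, hgD, hgT⟩ | ⟨hT, hgD, hgT⟩
    all_goals simpa [mem_barSets_insert_iff hgT, hgD] using hT
  · rintro ⟨T, g⟩ hx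
    simp only [coe_sigma, Set.mem_sigma_iff, mem_coe] at hx
    simp [insert_erase hx.2]
  · rintro ⟨T, g⟩ hx
    have hgT : g ∉ T := by
      simp only [coe_union, coe_sigma, Set.mem_union, Set.mem_sigma_iff, mem_coe, mem_compl,
        mem_union, mem_sdiff] at hx
      tauto
    simp [erase_insert hgT]

theorem card_barSets_succ (D : Finset α) (a b : ℕ) :
    (b + 1) * #(barSets D a (b + 1)) =
      (Fintype.card α - (a + b)) * #(barSets D a b) + (a + 1) * #(barSets D (a + 1) b) := by
  have hdisj : Disjoint (barSets D a b) (barSets D (a + 1) b) := by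
    simp only [barSets, disjoint_filter]
    omega
  have hbars : #((barSets D a (b + 1)).sigma fun T => T) = (b + 1) * #(barSets D a (b + 1)) := by
    rw [card_sigma, sum_const_nat fun T hT => (mem_filter.1 hT).2.2, mul_comm]
  have hasc : #((barSets D a b).sigma fun T => (D ∪ T)ᶜ) =
      (Fintype.card α - (a + b)) * #(barSets D a b) := by
    rw [card_sigma, sum_const_nat fun T hT => ?_, mul_comm]
    rw [card_compl, ← card_sdiff_add_card, (mem_filter.1 hT).2.1, (mem_filter.1 hT).2.2]
  have hdes : #((barSets D (a + 1) b).sigma (D \ ·)) = (a + 1) * #(barSets D (a + 1) b) := by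
    rw [card_sigma, sum_const_nat fun T hT => (mem_filter.1 hT).2.1, mul_comm]
  rw [← hbars, ← hasc, ← hdes, ← card_union_of_disjoint (disjoint_left.2 fun x h₁ h₂ =>
    disjoint_left.1 hdisj (mem_sigma.1 h₁).1 (mem_sigma.1 h₂).1)]
  exact card_sigma_barSets_succ D a b

end BarSets

def descentGaps {n : ℕ} (σ : Equiv.Perm (Fin n)) : Finset (Fin (n - 1)) :=
  {g | σ (gapR g) < σ (gapL g)}

lemma desNum_eq_card_sdiff {n : ℕ} (π : SegPerm n) : desNum π = #(descentGaps π.1 \ π.2) := by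
  unfold desNum descentGaps
  congr 1
  ext g
  simp [and_comm]

lemma Knum_eq_sum_card_barSets (n a b : ℕ) :
    Knum n a b = ∑ σ : Equiv.Perm (Fin n), #(barSets (descentGaps σ) a b) := by
  simp only [Knum, barSets, card_filter, Fintype.sum_prod_type, desNum_eq_card_sdiff, segNum]

theorem Knum_succ_rec (n a b : ℕ) :
    (b + 1) * Knum n a (b + 1) = (n - 1 - (a + b)) * Knum n a b + (a + 1) * Knum n (a + 1) b := by
  simp only [Knum_eq_sum_card_barSets, mul_sum, ← sum_add_distrib, card_barSets_succ,
    Fintype.card_fin]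

lemma Kint_natCast (n a b : ℕ) : Kint n a b = Knum n a b := by
  simp only [Kint, Knum, Nat.cast_inj]

theorem Kint_rec_j_general (n : ℕ) (i j : ℤ) (hi : 0 ≤ i) (hj : 0 < j)
    (hij : i + j < n) :
    j * Kint n i j
      = ((n : ℤ) - i - j) * Kint n i (j - 1) + (i + 1) * Kint n (i + 1) (j - 1) := by
  lift i to ℕ using hi
  obtain ⟨b, rfl⟩ : ∃ b : ℕ, j = b + 1 := ⟨j.toNat - 1, by omega⟩
  have hrec := congrArg (Nat.cast (R := ℤ)) (Knum_succ_rec n i b)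
  push_cast [Nat.cast_sub (show i + b ≤ n - 1 by omega), Nat.cast_sub (show 1 ≤ n by omega)]
    at hrec
  rw [add_sub_cancel_right]
  simp only [← Nat.cast_succ, Kint_natCast]
  push_cast
  linear_combination hrec

/-- the recurrence on `j` for the numbers `K(n,i,j)`. -/
theorem Kint_rec_j (n : ℕ) (i j : ℤ) (hn : 0 < n) (hi : 0 ≤ i) (hj : 0 < j)
    (hij : i + j < n) :
    j * Kint n i j
      = ((n : ℤ) - i - j) * Kint n i (j - 1) + (i + 1) * Kint n (i + 1) (j - 1) :=
  Kint_rec_j_general n i j hi hj hij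
end

section
/- For n > 0 and 0 ≤ i + j < n, K(n,i,j) = Σ_{k=0}^{n−1} binomial(k, i) · binomial(n−1−k, i+j−k) · A(n,k), where A(n,k) is the Eulerian number counting permutations of n with k descents. -/
open Finset

lemma countS {m : ℕ} (D : Finset (Fin m)) (i j : ℕ) :
    ((univ : Finset (Finset (Fin m))).filter
        (fun S => (D \ S).card = i ∧ S.card = j)).card
      = if D.card ≤ i + j then Nat.choose D.card i * Nat.choose (m - D.card) (i + j - D.card)
        else 0 := by
  classical
  set k := D.card with hk
  have hmem : ∀ S : Finset (Fin m), (D \ S).card = i ∧ S.card = j → i ≤ k ∧ k ≤ i + j := by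
    intro S ⟨h1, h2⟩
    have e1 : (D \ S).card + (D ∩ S).card = k := Finset.card_sdiff_add_card_inter D S
    have e2 : (D ∩ S).card ≤ S.card := Finset.card_le_card (Finset.inter_subset_right)
    omega
  by_cases hgood : i ≤ k ∧ k ≤ i + j
  · obtain ⟨h1, h2⟩ := hgood
    rw [if_pos h2]
    have key : ((univ : Finset (Finset (Fin m))).filter
        (fun S => (D \ S).card = i ∧ S.card = j)).card
        = ((D.powersetCard (k - i)) ×ˢ ((univ \ D).powersetCard (j - (k - i)))).card := by
      refine Finset.card_bij' (fun S _ => (S ∩ D, S \ D)) (fun p _ => p.1 ∪ p.2) ?_ ?_ ?_ ?_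
      · intro S hS
        rw [Finset.mem_filter] at hS
        obtain ⟨-, hS⟩ := hS
        have e1 : (D \ S).card + (D ∩ S).card = k := Finset.card_sdiff_add_card_inter D S
        have e2 : (S ∩ D).card + (S \ D).card = S.card := Finset.card_inter_add_card_sdiff S D
        have e3 : (S ∩ D).card = (D ∩ S).card := by rw [Finset.inter_comm]
        rw [Finset.mem_product, Finset.mem_powersetCard, Finset.mem_powersetCard]
        dsimp only
        refine ⟨⟨Finset.inter_subset_right, by omega⟩, ⟨?_, by omega⟩⟩
        exact Finset.sdiff_subset_sdiff (Finset.subset_univ S) le_rfl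
      · intro p hp
        rw [Finset.mem_product, Finset.mem_powersetCard, Finset.mem_powersetCard] at hp
        obtain ⟨⟨hA, hAc⟩, ⟨hB, hBc⟩⟩ := hp
        have hdisj : Disjoint D p.2 := by
          refine Finset.disjoint_left.mpr (fun x hx hx2 => ?_)
          have := hB hx2
          rw [Finset.mem_sdiff] at this
          exact this.2 hx
        have hdisjAB : Disjoint p.1 p.2 := hdisj.mono_left hA
        rw [Finset.mem_filter]
        refine ⟨Finset.mem_univ _, ?_, ?_⟩
        · have : D \ (p.1 ∪ p.2) = D \ p.1 := by
            rw [Finset.sdiff_union_distrib, Finset.sdiff_eq_self_of_disjoint hdisj,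
              Finset.inter_eq_left.mpr (Finset.sdiff_subset)]
          rw [this, Finset.card_sdiff_of_subset hA]
          omega
        · rw [Finset.card_union_of_disjoint hdisjAB]
          omega
      · intro S hS
        ext x
        simp only [Finset.mem_union, Finset.mem_inter, Finset.mem_sdiff]
        tauto
      · intro p hp
        rw [Finset.mem_product, Finset.mem_powersetCard, Finset.mem_powersetCard] at hp
        obtain ⟨⟨hA, hAc⟩, ⟨hB, hBc⟩⟩ := hp
        have hBD : ∀ x ∈ p.2, x ∉ D := by
          intro x hx
          have := hB hx
          rw [Finset.mem_sdiff] at this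
          exact this.2
        have h1 : (p.1 ∪ p.2) ∩ D = p.1 := by
          ext x
          simp only [Finset.mem_inter, Finset.mem_union]
          constructor
          · rintro ⟨h | h, hD⟩
            · exact h
            · exact absurd hD (hBD x h)
          · intro h; exact ⟨Or.inl h, hA h⟩
        have h2 : (p.1 ∪ p.2) \ D = p.2 := by
          ext x
          simp only [Finset.mem_sdiff, Finset.mem_union]
          constructor
          · rintro ⟨h | h, hD⟩
            · exact absurd (hA h) hD
            · exact h
          · intro h; exact ⟨Or.inr h, hBD x h⟩
        simp [h1, h2]
    rw [key, Finset.card_product, Finset.card_powersetCard, Finset.card_powersetCard,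
      Finset.card_univ_diff]
    simp only [Fintype.card_fin, ← hk]
    rw [Nat.choose_symm h1]
    congr 2
    omega
  · have hempty : ((univ : Finset (Finset (Fin m))).filter
        (fun S => (D \ S).card = i ∧ S.card = j)) = ∅ := by
      rw [Finset.filter_eq_empty_iff]
      intro S _
      intro h
      exact hgood (hmem S h)
    rw [hempty, Finset.card_empty]
    by_cases h2 : k ≤ i + j
    · rw [if_pos h2]
      have : k < i := by omega
      rw [Nat.choose_eq_zero_of_lt this, zero_mul]
    · rw [if_neg h2]

/-- `K(n,i,j)` in terms of Eulerian numbers, where the binomial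
`(n-1-k choose i+j-k)` is understood to vanish when `k > i + j`. -/
theorem Knum_eq_sum_eulerian (n i j : ℕ) (hn : 0 < n) (hij : i + j < n) :
    Knum n i j
      = ∑ k ∈ Finset.range n,
          (if k ≤ i + j then Nat.choose k i * Nat.choose (n - 1 - k) (i + j - k) else 0)
            * eulerian n k := by
  classical
  set D : Equiv.Perm (Fin n) → Finset (Fin (n - 1)) :=
    fun σ => univ.filter (fun g : Fin (n - 1) => σ (gapR g) < σ (gapL g)) with hD
  have hDcard : ∀ σ, (D σ).card = permDes σ := fun σ => rfl
  have hdes : ∀ (σ : Equiv.Perm (Fin n)) (S : Finset (Fin (n - 1))),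
      desNum (σ, S) = ((D σ) \ S).card := by
    intro σ S
    unfold desNum
    congr 1
    ext g
    simp only [Finset.mem_filter, Finset.mem_univ, true_and, Finset.mem_sdiff, hD]
    tauto
  have step1 : Knum n i j = ∑ σ : Equiv.Perm (Fin n),
      ((univ : Finset (Finset (Fin (n - 1)))).filter
        (fun S => ((D σ) \ S).card = i ∧ S.card = j)).card := by
    rw [Knum]
    rw [Finset.card_eq_sum_card_fiberwise
      (f := Prod.fst) (t := univ) (fun x _ => Finset.mem_univ _)]
    apply Finset.sum_congr rfl
    intro σ _
    refine Finset.card_bij' (fun π _ => π.2) (fun S _ => (σ, S)) ?_ ?_ ?_ ?_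
    · intro π hπ
      simp only [Finset.mem_filter, Finset.mem_univ, true_and] at hπ ⊢
      obtain ⟨⟨h1, h2⟩, h3⟩ := hπ
      subst h3
      constructor
      · rw [← hdes π.1 π.2, Prod.mk.eta]; exact h1
      · exact h2
    · intro S hS
      simp only [Finset.mem_filter, Finset.mem_univ, true_and] at hS ⊢
      refine ⟨⟨?_, hS.2⟩, trivial⟩
      rw [hdes]; exact hS.1
    · intro π hπ
      simp only [Finset.mem_filter] at hπ
      exact Prod.ext hπ.2.symm rfl
    · intro S _
      rfl
  rw [step1]
  have step2 : ∀ σ : Equiv.Perm (Fin n),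
      ((univ : Finset (Finset (Fin (n - 1)))).filter
        (fun S => ((D σ) \ S).card = i ∧ S.card = j)).card
      = (if permDes σ ≤ i + j then
          Nat.choose (permDes σ) i * Nat.choose (n - 1 - permDes σ) (i + j - permDes σ) else 0) := by
    intro σ
    rw [countS, hDcard]
  rw [Finset.sum_congr rfl (fun σ _ => step2 σ)]
  have hmaps : ∀ σ ∈ (univ : Finset (Equiv.Perm (Fin n))), permDes σ ∈ Finset.range n := by
    intro σ _
    rw [Finset.mem_range]
    have : permDes σ ≤ Fintype.card (Fin (n - 1)) := by
      unfold permDes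
      exact (Finset.card_filter_le _ _).trans (le_of_eq (Finset.card_univ))
    rw [Fintype.card_fin] at this
    omega
  rw [← Finset.sum_fiberwise_of_maps_to hmaps
    (fun σ => if permDes σ ≤ i + j then
      Nat.choose (permDes σ) i * Nat.choose (n - 1 - permDes σ) (i + j - permDes σ) else 0)]
  apply Finset.sum_congr rfl
  intro k _
  have hconst : ∀ σ ∈ (univ : Finset (Equiv.Perm (Fin n))).filter (fun σ => permDes σ = k),
      (if permDes σ ≤ i + j then
        Nat.choose (permDes σ) i * Nat.choose (n - 1 - permDes σ) (i + j - permDes σ) else 0)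
      = (if k ≤ i + j then Nat.choose k i * Nat.choose (n - 1 - k) (i + j - k) else 0) := by
    intro σ hσ
    rw [(Finset.mem_filter.mp hσ).2]
  rw [Finset.sum_congr rfl hconst, Finset.sum_const, smul_eq_mul, eulerian, mul_comm]
end

section
/- The number of segmented permutations of size n with 0 descents and exactly j bars equals (j+1)! · S(n, j+1), where S(n,k) is the Stirling number of the second kind. -/
open Finset

/-!
A segmented permutation without descents is increasing on each of the `j + 1` blocks cut out by
its `j` bars, so it is determined by the block in which each value sits. Sending a value to the
block of its position is a surjection `Fin n → Fin (j + 1)`; conversely a surjection `f` is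
recovered as the stable sort of `f`, with bars exactly where `f ∘ sort f` jumps. Surjections onto
a `(j + 1)`-set are counted by `(j + 1)! S(n, j + 1)`, via the recurrence on the image of the
first point.
-/

open Finset Function
open scoped Nat

section Surjections

variable {α β : Type*}

def rangeEqEquivSurjective (s : Set β) :
    {g : α → β // Set.range g = s} ≃ {h : α → s // Surjective h} where
  toFun g := ⟨fun x => ⟨g.1 x, by rcases g with ⟨g, rfl⟩; exact Set.mem_range_self x⟩,
    fun ⟨b, hb⟩ => by
      rw [← g.2] at hb
      obtain ⟨x, hx⟩ := hb
      exact ⟨x, Subtype.ext hx⟩⟩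
  invFun h := ⟨fun x => h.1 x, by
    rw [Set.range_comp', h.2.range_eq, Set.image_univ, Subtype.range_coe]⟩
  left_inv _ := rfl
  right_inv _ := rfl

theorem surjective_fin_cons_iff {n : ℕ} (a : β) (g : Fin n → β) :
    Surjective (Fin.cons a g : Fin (n + 1) → β) ↔
      Set.range g = Set.univ ∨ Set.range g = {a}ᶜ := by
  rw [← Set.range_eq_univ, Fin.range_cons, Set.insert_eq, ← Set.compl_subset_iff_union]
  constructor
  · intro h
    by_cases ha : a ∈ Set.range g
    · refine Or.inl (Set.eq_univ_of_forall fun b => ?_)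
      obtain rfl | hb := eq_or_ne b a
      exacts [ha, h hb]
    · exact Or.inr (h.antisymm' fun b hb hba => ha (hba ▸ hb))
  · rintro (h | h) <;> simp [h]

variable [Fintype β] [DecidableEq β]

theorem card_surjective_fin_succ (n : ℕ) :
    Fintype.card {f : Fin (n + 1) → β // Surjective f} =
      ∑ a : β, (Fintype.card {g : Fin n → β // Surjective g} +
        Fintype.card {g : Fin n → ({a}ᶜ : Set β) // Surjective g}) := by
  let consEquiv := ((Fin.consEquiv fun _ => β).symm.subtypeEquiv fun f => by
      rw [← Fin.cons_self_tail f]; rfl).trans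
    (Equiv.subtypeProdEquivSigmaSubtype fun (a : β) (g : Fin n → β) =>
      Surjective (Fin.cons a g : Fin (n + 1) → β))
  rw [Fintype.card_congr consEquiv, Fintype.card_sigma]
  refine sum_congr rfl fun a _ => ?_
  have hdisj :
      Disjoint (fun g : Fin n → β => Set.range g = Set.univ) (Set.range · = {a}ᶜ) := by
    simp only [Pi.disjoint_iff, Prop.disjoint_iff, not_and]
    intro g h
    simp [h, Set.ext_iff]
  rw [Fintype.card_congr ((Equiv.subtypeEquivRight (surjective_fin_cons_iff a)).trans
    (subtypeOrEquiv _ _ hdisj)), Fintype.card_sum,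
    Fintype.card_congr (Equiv.subtypeEquivRight fun g : Fin n → β => Set.range_eq_univ),
    Fintype.card_congr (rangeEqEquivSurjective _)]

theorem card_surjective_fin (n : ℕ) :
    Fintype.card {f : Fin n → β // Surjective f} =
      (Fintype.card β)! * Nat.stirlingSecond n (Fintype.card β) := by
  induction n generalizing β with
  | zero =>
    obtain hβ | ⟨⟨b⟩⟩ := isEmpty_or_nonempty β
    · simp [Surjective]
    · have : IsEmpty {f : Fin 0 → β // Surjective f} :=
        ⟨fun f => (f.2 b).elim fun i _ => i.elim0⟩
      simp [Nat.stirlingSecond_eq_zero_of_lt (Fintype.card_pos_iff.2 ⟨b⟩)]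
  | succ n ih =>
    have hcompl (a : β) : Fintype.card ({a}ᶜ : Set β) = Fintype.card β - 1 := by
      simp [filter_ne', card_erase_of_mem]
    simp only [card_surjective_fin_succ, ih, hcompl, sum_const, card_univ, smul_eq_mul]
    generalize Fintype.card β = k
    cases k with
    | zero => simp
    | succ k =>
      rw [Nat.stirlingSecond_succ_succ, Nat.factorial_succ, Nat.add_sub_cancel]
      ring

end Surjections

theorem stirling_eq_stirlingSecond : ∀ n k, stirling n k = Nat.stirlingSecond n k
  | 0, 0 | 0, _ + 1 | _ + 1, 0 => rfl
  | n + 1, k + 1 => by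
    rw [stirling, Nat.stirlingSecond_succ_succ, stirling_eq_stirlingSecond n,
      stirling_eq_stirlingSecond n]

section Blocks

variable {m : ℕ}

theorem Fin.exists_eq_of_step_le_one (g : Fin (m + 1) → ℕ)
    (hstep : ∀ i : Fin m, g i.succ ≤ g i.castSucc + 1) {v : ℕ} (h0 : g 0 ≤ v) :
    ∀ q, v ≤ g q → ∃ p, g p = v := by
  refine Fin.induction (fun hv => ⟨0, le_antisymm hv h0 |>.symm⟩) fun i ih hv => ?_
  by_cases hi : v ≤ g i.castSucc
  · exact ih hi
  · exact ⟨i.succ, by have := hstep i; omega⟩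

/-- Gap `i : Fin m` lies between positions `i.castSucc = gapL i` and `i.succ = gapR i` (for
`n = m + 1`); the bars `S` cut the positions into `#S + 1` blocks, and `p` lies in block number
`blockIndex S p`. -/
def blockIndex (S : Finset (Fin m)) (p : Fin (m + 1)) : ℕ := #{i ∈ S | i.castSucc < p}

variable (S : Finset (Fin m))

@[simp]
theorem blockIndex_zero : blockIndex S 0 = 0 := by
  simp [blockIndex]

theorem blockIndex_succ (i : Fin m) :
    blockIndex S i.succ = blockIndex S i.castSucc + if i ∈ S then 1 else 0 := by
  simp only [blockIndex, Fin.castSucc_lt_succ_iff, Fin.castSucc_lt_castSucc_iff, le_iff_lt_or_eq,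
    filter_or, filter_eq']
  split
  · rw [union_comm, ← insert_eq, card_insert_of_notMem (by simp)]
  · simp

@[simp]
theorem blockIndex_last : blockIndex S (Fin.last m) = #S := by
  simp [blockIndex, Fin.castSucc_lt_last]

theorem monotone_blockIndex : Monotone (blockIndex S) := fun _ _ hpq =>
  card_le_card <| monotone_filter_right _ fun _ _ hi => hi.trans_le hpq

theorem blockIndex_le_card (p : Fin (m + 1)) : blockIndex S p ≤ #S :=
  blockIndex_last S ▸ monotone_blockIndex S (Fin.le_last p)

theorem exists_blockIndex_eq {v : ℕ} (hv : v ≤ #S) : ∃ p, blockIndex S p = v :=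
  Fin.exists_eq_of_step_le_one _ (fun i => by rw [blockIndex_succ]; split <;> omega)
    (by simp) (Fin.last m) (by simpa using hv)

def jumpSet (g : Fin (m + 1) → ℕ) : Finset (Fin m) := {i | g i.castSucc < g i.succ}

@[simp]
theorem jumpSet_blockIndex : jumpSet (blockIndex S) = S := by
  ext i
  simp only [jumpSet, mem_filter, mem_univ, true_and, blockIndex_succ]
  split <;> simp_all

theorem blockIndex_jumpSet {g : Fin (m + 1) → ℕ} (hg : Monotone g) (h0 : g 0 = 0)
    (hstep : ∀ i : Fin m, g i.succ ≤ g i.castSucc + 1) : blockIndex (jumpSet g) = g := by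
  funext p
  induction p using Fin.induction with
  | zero => simp [h0]
  | succ i ih =>
    have := hg i.castSucc_le_succ
    have := hstep i
    rw [blockIndex_succ, ih]
    simp only [jumpSet, mem_filter, mem_univ, true_and]
    split <;> omega

end Blocks

section MonotoneSurjective

variable {m j : ℕ} {f : Fin (m + 1) → Fin (j + 1)}

theorem Monotone.map_zero_of_surjective (hmono : Monotone f) (hsurj : Surjective f) :
    f 0 = 0 := by
  obtain ⟨p, hp⟩ := hsurj 0
  exact le_antisymm (hp ▸ hmono (Fin.zero_le p)) (Fin.zero_le _)

theorem Monotone.map_last_of_surjective (hmono : Monotone f) (hsurj : Surjective f) :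
    f (Fin.last m) = Fin.last j := by
  obtain ⟨p, hp⟩ := hsurj (Fin.last j)
  exact le_antisymm (Fin.le_last _) (hp ▸ hmono (Fin.le_last p))

theorem Monotone.val_succ_le_of_surjective (hmono : Monotone f) (hsurj : Surjective f)
    (i : Fin m) : (f i.succ : ℕ) ≤ f i.castSucc + 1 := by
  by_contra! h
  obtain ⟨p, hp⟩ := hsurj ⟨f i.castSucc + 1, by omega⟩
  rcases le_or_gt p i.castSucc with hpi | hpi
  · have := Fin.le_def.1 (hp ▸ hmono hpi)
    simp only at this
    omega
  · have := Fin.le_def.1 (hp ▸ hmono (Fin.castSucc_lt_iff_succ_le.1 hpi))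
    simp only at this
    omega

end MonotoneSurjective

section Descents

variable {m : ℕ}

theorem desNum_eq_zero_iff (σ : Equiv.Perm (Fin (m + 1))) (S : Finset (Fin m)) :
    desNum (σ, S) = 0 ↔ ∀ i ∉ S, σ i.castSucc < σ i.succ := by
  simp only [desNum, card_eq_zero, filter_eq_empty_iff, mem_univ, not_and, not_lt, forall_const]
  exact forall_congr' fun i => imp_congr_right fun _ =>
    (σ.injective.ne (Fin.castSucc_lt_succ (i := i)).ne).le_iff_lt

theorem lt_of_blockIndex_eq {α : Type*} [Preorder α] {S : Finset (Fin m)}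
    {x : Fin (m + 1) → α} (hx : ∀ i ∉ S, x i.castSucc < x i.succ) {p q : Fin (m + 1)}
    (hpq : p < q) (h : blockIndex S p = blockIndex S q) : x p < x q := by
  induction q using Fin.induction with
  | zero => exact absurd hpq (Fin.not_lt_zero p)
  | succ i ih =>
    have hp : p ≤ i.castSucc := Fin.le_castSucc_iff.2 hpq
    have hbi := blockIndex_succ S i
    have hi : i ∉ S := fun hi => by
      have := monotone_blockIndex S hp
      rw [if_pos hi] at hbi
      omega
    rw [if_neg hi, add_zero] at hbi
    rcases hp.lt_or_eq with hp | rfl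
    · exact (ih hp (h.trans hbi)).trans (hx i hi)
    · exact hx i hi

variable {j : ℕ}

theorem sort_eq_of_val_eq_blockIndex {σ : Equiv.Perm (Fin (m + 1))} {S : Finset (Fin m)}
    (hσ : desNum (σ, S) = 0) {f : Fin (m + 1) → Fin (j + 1)}
    (hf : ∀ p, (f (σ p) : ℕ) = blockIndex S p) : Tuple.sort f = σ := by
  refine (Tuple.eq_sort_iff.2 ⟨fun p q hpq => ?_, fun p q hpq hfpq => ?_⟩).symm
  · simpa [Fin.le_def, hf] using monotone_blockIndex S hpq
  · exact lt_of_blockIndex_eq ((desNum_eq_zero_iff σ S).1 hσ) hpq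
      (by simpa [hf] using congrArg Fin.val hfpq)

theorem desNum_sort_jumpSet (f : Fin (m + 1) → Fin (j + 1)) :
    desNum (Tuple.sort f, jumpSet fun p => (f (Tuple.sort f p) : ℕ)) = 0 := by
  rw [desNum_eq_zero_iff]
  intro i hi
  have heq : f (Tuple.sort f i.castSucc) = f (Tuple.sort f i.succ) := by
    simp only [jumpSet, mem_filter, mem_univ, true_and, not_lt] at hi
    exact le_antisymm (Tuple.monotone_sort f (Fin.castSucc_le_succ i)) (Fin.le_def.2 hi)
  exact (Tuple.eq_sort_iff.1 rfl).2 _ _ (Fin.castSucc_lt_succ) heq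

variable {f : Fin (m + 1) → Fin (j + 1)}

theorem blockIndex_jumpSet_sort (hf : Surjective f) :
    blockIndex (jumpSet fun p => (f (Tuple.sort f p) : ℕ)) =
      fun p => (f (Tuple.sort f p) : ℕ) :=
  have hmono := Tuple.monotone_sort f
  have hsurj := hf.comp (Tuple.sort f).surjective
  blockIndex_jumpSet (Fin.val_strictMono.monotone.comp hmono)
    (congrArg Fin.val (hmono.map_zero_of_surjective hsurj)) (hmono.val_succ_le_of_surjective hsurj)

theorem card_jumpSet_sort (hf : Surjective f) :
    #(jumpSet fun p => (f (Tuple.sort f p) : ℕ)) = j := by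
  rw [← blockIndex_last, blockIndex_jumpSet_sort hf]
  exact congrArg Fin.val
    ((Tuple.monotone_sort f).map_last_of_surjective (hf.comp (Tuple.sort f).surjective))

end Descents

theorem Knum_succ_zero_eq_card_surjective (m j : ℕ) :
    Knum (m + 1) 0 j = Fintype.card {f : Fin (m + 1) → Fin (j + 1) // Surjective f} := by
  -- `Fin (m + 1 - 1)` is only definitionally `Fin m`; restating over `Fin m` keeps the
  -- rewrites below type-correct.
  change #{π : Equiv.Perm (Fin (m + 1)) × Finset (Fin m) | desNum π = 0 ∧ #π.2 = j} = _
  rw [Fintype.card_subtype]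
  refine card_bij'
    (i := fun π hπ v => ⟨blockIndex π.2 (π.1⁻¹ v), Nat.lt_succ_of_le <|
      (blockIndex_le_card _ _).trans (mem_filter.1 hπ).2.2.le⟩)
    (j := fun f _ => (Tuple.sort f, jumpSet fun p => (f (Tuple.sort f p) : ℕ))) ?_ ?_ ?_ ?_
  · rintro ⟨σ, S⟩ hπ
    simp only [mem_filter, mem_univ, true_and] at hπ ⊢
    intro b
    obtain ⟨p, hp⟩ := exists_blockIndex_eq S ((Nat.le_of_lt_succ b.2).trans_eq hπ.2.symm)
    exact ⟨σ p, Fin.ext (by simpa using hp)⟩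
  · intro f hf
    simp only [mem_filter, mem_univ, true_and] at hf ⊢
    exact ⟨desNum_sort_jumpSet f, card_jumpSet_sort hf⟩
  · rintro ⟨σ, S⟩ hπ
    simp only [mem_filter, mem_univ, true_and] at hπ
    rw [sort_eq_of_val_eq_blockIndex hπ.1 ?_] <;> simp
  · intro f hf
    simp only [mem_filter, mem_univ, true_and] at hf
    refine funext fun v => Fin.ext ?_
    dsimp only
    rw [blockIndex_jumpSet_sort hf]
    simp

/-- segmented permutations of size `n` with no descents and `j`
bars are counted by `(j+1)! S(n, j+1)`. -/
theorem Knum_zero_descents (n j : ℕ) (hn : 1 ≤ n) :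
    Knum n 0 j = Nat.factorial (j + 1) * stirling n (j + 1) := by
  obtain ⟨m, rfl⟩ := Nat.exists_eq_add_of_le' hn
  rw [Knum_succ_zero_eq_card_surjective, card_surjective_fin, Fintype.card_fin,
    stirling_eq_stirlingSecond]
end

section
/- For all n ≥ 1, α_n(−1, 1) = 2^{n−1}, where α_n(t,q) = Σ_{segmented permutations π of size n} t^{des(π)} q^{seg(π)}. -/
open Finset

/-!
Expanding over bars, the sign `(-1)^des(σ, S)` is a product over the unbarred gaps of `-1`
at descents of `σ` and `1` at ascents, so summing over all bar sets `S` gives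
`∏ (1 + ε_i)` with `ε_i = ±1`. This product vanishes as soon as `σ` has a descent and equals
`2^(n-1)` otherwise, and the identity is the only permutation without descents.
-/

theorem sum_neg_one_pow_card_filter_not_mem {ι R : Type*} [Fintype ι] [DecidableEq ι]
    [CommRing R] (p : ι → Prop) [DecidablePred p] :
    ∑ S : Finset ι, (-1 : R) ^ #{i | i ∉ S ∧ p i} =
      if ∀ i, ¬ p i then 2 ^ Fintype.card ι else 0 := by
  have sign_eq_prod (S : Finset ι) :
      (-1 : R) ^ #{i | i ∉ S ∧ p i} = ∏ i ∈ Sᶜ, if p i then -1 else 1 := by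
    rw [prod_ite, prod_const, prod_const_one, mul_one]
    congr 2 with i
    simp
  calc ∑ S : Finset ι, (-1 : R) ^ #{i | i ∉ S ∧ p i}
      = ∏ i, (1 + if p i then -1 else 1) := by
        simp only [sign_eq_prod, Fintype.prod_add, prod_const_one, one_mul]
    _ = ∏ i, if ¬ p i then 2 else 0 := by
        congr! 1 with i
        split_ifs <;> norm_num
    _ = _ := by rw [Fintype.prod_ite_zero, prod_const, card_univ]

theorem permDes_eq_zero_iff {n : ℕ} (σ : Equiv.Perm (Fin n)) : permDes σ = 0 ↔ σ = 1 := by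
  rw [← Equiv.Perm.monotone_iff]
  rcases n with _ | m
  · simp [permDes, Subsingleton.elim σ 1, monotone_id]
  · simp only [permDes, card_eq_zero, filter_eq_empty_iff, mem_univ, true_implies, not_lt,
      Fin.monotone_iff_le_succ]
    -- `gapL i` and `gapR i` are `i.castSucc` and `i.succ` definitionally
    rfl

theorem sum_neg_one_pow_desNum {R : Type*} [CommRing R] {n : ℕ} (σ : Equiv.Perm (Fin n)) :
    ∑ S : Finset (Fin (n - 1)), (-1 : R) ^ desNum (σ, S) =
      if σ = 1 then 2 ^ (n - 1) else 0 := by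
  simp only [← permDes_eq_zero_iff, desNum, sum_neg_one_pow_card_filter_not_mem,
    Fintype.card_fin, permDes, card_eq_zero, filter_eq_empty_iff, mem_univ, true_implies]

theorem alphaF_neg_one_one_general (n : ℕ) :
    alphaF n (-1) 1 = 2 ^ (n - 1) := by
  simp only [alphaF, one_pow, mul_one, Fintype.sum_prod_type, sum_neg_one_pow_desNum,
    sum_ite_eq', mem_univ, if_true]

/-- `α_n(-1, 1) = 2^(n-1)`. -/
theorem alphaF_neg_one_one (n : ℕ) (hn : 1 ≤ n) :
    alphaF n (-1) 1 = 2 ^ (n - 1) :=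
  alphaF_neg_one_one_general n
end

section
/- For all n ≥ 1, the bivariate polynomial α_n(t,q) = Σ_{π ∈ SP_n} t^{des(π)} q^{seg(π)} satisfies the symmetry α_n(t,q) = t^{n−1} α_n(1/t, q/t), i.e., K(n,i,j) = K(n, n−1−i−j, j) for all i,j. -/
open Finset

/-! Complementing the values, `σ ↦ rev ∘ σ`, turns every unbarred descent into an unbarred
ascent and vice versa while keeping the bars, so the descents of `σ` and of `rev ∘ σ`
together with the bars account for each of the `n - 1` gaps exactly once. -/

lemma gapL_ne_gapR {n : ℕ} (i : Fin (n - 1)) : gapL i ≠ gapR i := by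
  simp [gapL, gapR, Fin.ext_iff]

lemma desNum_revPerm_mul {n : ℕ} (σ : Equiv.Perm (Fin n)) (S : Finset (Fin (n - 1))) :
    desNum (Fin.revPerm * σ, S) = #{i ∈ Sᶜ | σ (gapL i) < σ (gapR i)} := by
  rw [desNum]
  congr 1
  ext i
  simp [Fin.rev_lt_rev]

lemma desNum_revPerm_mul_add_desNum_add_card {n : ℕ} (σ : Equiv.Perm (Fin n))
    (S : Finset (Fin (n - 1))) :
    desNum (Fin.revPerm * σ, S) + desNum (σ, S) + #S = n - 1 := by
  have hdes : desNum (σ, S) = #{i ∈ Sᶜ | ¬ σ (gapL i) < σ (gapR i)} := by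
    rw [desNum]
    congr 1
    ext i
    simp [(σ.injective.ne (gapL_ne_gapR i)).symm.le_iff_lt]
  rw [desNum_revPerm_mul, hdes, card_filter_add_card_filter_not, card_compl, Fintype.card_fin]
  have := (card_le_univ S).trans_eq (Fintype.card_fin _)
  omega

lemma pow_mul_pow_eq_pow_mul_one_div_pow_mul_div_pow {K : Type*} [Field K] {t : K} (ht : t ≠ 0)
    (q : K) {a b s m : ℕ} (h : b + a + s = m) :
    t ^ a * q ^ s = t ^ m * ((1 / t) ^ b * (q / t) ^ s) := by
  subst h
  simp only [div_eq_mul_inv, one_mul, mul_pow, pow_add, inv_pow]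
  field_simp

theorem alphaF_symmetry_general (n : ℕ) (t q : ℝ) (ht : t ≠ 0) :
    alphaF n t q = t ^ (n - 1) * alphaF n (1 / t) (q / t) := by
  rw [alphaF, alphaF, mul_sum]
  refine Fintype.sum_equiv ((Equiv.mulLeft Fin.revPerm).prodCongr (Equiv.refl _)) _ _ ?_
  rintro ⟨σ, S⟩
  exact pow_mul_pow_eq_pow_mul_one_div_pow_mul_div_pow ht q
    (desNum_revPerm_mul_add_desNum_add_card σ S)

/-- the symmetry `α_n(t,q) = t^(n-1) α_n(1/t, q/t)`. -/
theorem alphaF_symmetry (n : ℕ) (hn : 1 ≤ n) (t q : ℝ) (ht : t ≠ 0) :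
    alphaF n t q = t ^ (n - 1) * alphaF n (1 / t) (q / t) :=
  alphaF_symmetry_general n t q ht
end

section
/- For n ≥ 2, the polynomials α_n satisfy the differential recurrence α_n(t,q) = ((n−2)tq + (n−1)t + 2q + 1)·α_{n−1}(t,q) + (t − t²)(q+1)·∂α_{n−1}/∂t + (1−t)(q² + q)·∂α_{n−1}/∂q. -/
open Finset

/-!
Summing over the bars gap by gap gives
`α_n(t,q) = ∑_{σ ∈ S_n} (t+q)^{des σ} (1+q)^{n-1-des σ}`: a descent gap contributes `t` or `q`,
an ascent gap `1` or `q`. Inserting the maximum into one of the `n` slots of `σ ∈ S_{n-1}`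
keeps the number of descents in the `des σ + 1` slots at the end or inside a descent, and raises
it by one in the other slots. Hence
`∑_{τ ∈ S_n} f(des τ) = ∑_{σ ∈ S_{n-1}} ((d+1) f(d) + (n-1-d) f(d+1))` with `d = des σ`.
With `a = t+q` and `b = 1+q`, the operator `(t-t²)(q+1)∂_t + (1-t)(q²+q)∂_q` sends `a^d b^e`
to `(1-t)(d a^d b^{e+1} + q e a^d b^e)`, so the recurrence reduces to a polynomial identity for
each summand.
-/

open Equiv Function

lemma sum_pow_desNum_mul_pow_segNum {n : ℕ} (σ : Perm (Fin n)) (t q : ℝ) :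
    ∑ S : Finset (Fin (n - 1)), t ^ desNum (σ, S) * q ^ segNum (σ, S)
      = (t + q) ^ permDes σ * (1 + q) ^ (n - 1 - permDes σ) := by
  set D : Fin (n - 1) → Prop := fun i => σ (gapR i) < σ (gapL i)
  calc _ = ∑ S ∈ univ.powerset, (∏ _i ∈ S, q) * ∏ i ∈ univ \ S, (if D i then t else 1) := by
          rw [powerset_univ]
          refine sum_congr rfl fun S _ => ?_
          have hdes : desNum (σ, S) = #{i ∈ univ \ S | D i} := by
            simp only [desNum, sdiff_eq_filter, filter_filter, D]
          rw [prod_const, prod_ite, prod_const, prod_const, one_pow, mul_one, segNum, hdes,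
            mul_comm]
    _ = ∏ i, (q + if D i then t else 1) := (prod_add _ _ _).symm
    _ = (t + q) ^ permDes σ * (1 + q) ^ (n - 1 - permDes σ) := by
          simp_rw [apply_ite (q + ·)]
          rw [prod_ite, prod_const, prod_const, add_comm q t, add_comm q 1]
          have hsplit := card_filter_add_card_filter_not (s := univ) fun i => D i
          rw [card_univ, Fintype.card_fin] at hsplit
          have hD : permDes σ = #{i | D i} := rfl
          rw [hD, show #{i | ¬D i} = n - 1 - #{i | D i} by omega]

lemma alphaF_eq_sum_perm (n : ℕ) (t q : ℝ) :
    alphaF n t q = ∑ σ : Perm (Fin n), (t + q) ^ permDes σ * (1 + q) ^ (n - 1 - permDes σ) := by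
  rw [alphaF, Fintype.sum_prod_type]
  exact sum_congr rfl fun σ _ => sum_pow_desNum_mul_pow_segNum σ t q

lemma permDes_le {n : ℕ} (σ : Perm (Fin n)) : permDes σ ≤ n - 1 :=
  (card_filter_le _ _).trans_eq (by simp)

lemma deriv_alphaF_t (n : ℕ) (t q : ℝ) :
    deriv (fun s => alphaF n s q) t
      = ∑ σ : Perm (Fin n),
          permDes σ * (t + q) ^ (permDes σ - 1) * (1 + q) ^ (n - 1 - permDes σ) := by
  simp_rw [alphaF_eq_sum_perm]
  refine (HasDerivAt.fun_sum fun σ _ => ?_).deriv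
  simpa using (((hasDerivAt_id t).add_const q).pow (permDes σ)).mul_const
    ((1 + q) ^ (n - 1 - permDes σ))

lemma deriv_alphaF_q (n : ℕ) (t q : ℝ) :
    deriv (fun s => alphaF n t s) q
      = ∑ σ : Perm (Fin n),
          (permDes σ * (t + q) ^ (permDes σ - 1) * (1 + q) ^ (n - 1 - permDes σ)
            + (t + q) ^ permDes σ
              * ((n - 1 - permDes σ : ℕ) * (1 + q) ^ (n - 1 - permDes σ - 1))) := by
  simp_rw [alphaF_eq_sum_perm]
  refine (HasDerivAt.fun_sum fun σ _ => ?_).deriv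
  simpa using (((hasDerivAt_id q).const_add t).pow (permDes σ)).fun_mul
    (((hasDerivAt_id q).const_add 1).pow (n - 1 - permDes σ))

def descents {α : Type*} [LinearOrder α] (u : ℕ → α) (L : ℕ) : ℕ :=
  #{i ∈ range L | u (i + 1) < u i}

def insertAt {α : Type*} (u : ℕ → α) (k : ℕ) (x : α) (i : ℕ) : α :=
  if i < k then u i else if i = k then x else u (i - 1)

lemma descents_eq_sum {α : Type*} [LinearOrder α] (u : ℕ → α) (L : ℕ) :
    descents u L = ∑ i ∈ range L, if u (i + 1) < u i then 1 else 0 :=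
  card_filter _ _

lemma descents_insertAt {α : Type*} [LinearOrder α] {u : ℕ → α} {k L : ℕ} {x : α}
    (hk : k ≠ 0) (hkL : k ≤ L) (hl : u (k - 1) < x) (hr : u k < x) :
    descents (insertAt u k x) (L + 1) + (if u k < u (k - 1) then 1 else 0)
      = descents u L + 1 := by
  obtain ⟨a, rfl⟩ : ∃ a, k = a + 1 := ⟨k - 1, by omega⟩
  obtain ⟨r, rfl⟩ : ∃ r, L = a + 1 + r := ⟨L - (a + 1), by omega⟩
  rw [Nat.add_sub_cancel] at hl ⊢
  set v := insertAt u (a + 1) x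
  have hbelow : ∀ i ∈ range a,
      (if v (i + 1) < v i then 1 else 0) = if u (i + 1) < u i then 1 else 0 := by
    intro i hi
    rw [mem_range] at hi
    simp only [v, insertAt, if_pos (show i + 1 < a + 1 by omega), if_pos (show i < a + 1 by omega)]
  have hx : v a = u a ∧ v (a + 1) = x ∧ v (a + 1 + 1) = u (a + 1) := by
    simp [v, insertAt]
  have habove : ∀ i ∈ range r, (if v (a + 2 + i + 1) < v (a + 2 + i) then 1 else 0)
      = if u (a + 1 + i + 1) < u (a + 1 + i) then 1 else 0 := by
    intro i _
    simp only [v, insertAt, if_neg (show ¬a + 2 + i < a + 1 by omega),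
      if_neg (show ¬a + 2 + i + 1 < a + 1 by omega), if_neg (show a + 2 + i ≠ a + 1 by omega),
      if_neg (show a + 2 + i + 1 ≠ a + 1 by omega), show a + 2 + i - 1 = a + 1 + i by omega,
      show a + 2 + i + 1 - 1 = a + 1 + i + 1 by omega]
  rw [descents_eq_sum, descents_eq_sum, show a + 1 + r + 1 = a + 2 + r by omega,
    sum_range_add, sum_range_succ, sum_range_succ, sum_range_add, sum_range_succ,
    sum_congr rfl hbelow, sum_congr rfl habove, hx.1, hx.2.1, hx.2.2, if_neg hl.not_gt, if_pos hr]
  omega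

def insertMax {m : ℕ} (p : Fin (m + 1)) (σ : Perm (Fin m)) : Perm (Fin (m + 1)) :=
  (finSuccEquiv' p).trans (σ.optionCongr.trans (finSuccEquiv' (Fin.last m)).symm)

@[simp]
lemma insertMax_apply_self {m : ℕ} (p : Fin (m + 1)) (σ : Perm (Fin m)) :
    insertMax p σ p = Fin.last m := by
  simp [insertMax]

@[simp]
lemma insertMax_apply_succAbove {m : ℕ} (p : Fin (m + 1)) (σ : Perm (Fin m)) (j : Fin m) :
    insertMax p σ (p.succAbove j) = (σ j).castSucc := by
  simp [insertMax]

lemma insertMax_bijective (m : ℕ) :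
    Bijective fun x : Fin (m + 1) × Perm (Fin m) => insertMax x.1 x.2 := by
  refine (Fintype.bijective_iff_injective_and_card _).2
    ⟨?_, by simp [Fintype.card_perm, Nat.factorial_succ]⟩
  rintro ⟨p, σ⟩ ⟨p', σ'⟩ h
  simp only at h
  obtain rfl : p = p' := by
    by_contra hne
    obtain ⟨j, rfl⟩ := Fin.exists_succAbove_eq hne
    simpa using congr($h (p'.succAbove j)).symm
  have hσ : σ = σ' := Equiv.ext fun j => by simpa using congr($h (p.succAbove j))
  rw [hσ]

lemma insertMax_apply_of_lt {m : ℕ} {p : Fin (m + 1)} (σ : Perm (Fin m)) {i : ℕ} (hi : i < p) :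
    insertMax p σ ⟨i, by omega⟩ = (σ ⟨i, by omega⟩).castSucc := by
  rw [← insertMax_apply_succAbove, Fin.succAbove_of_castSucc_lt _ _ hi, Fin.castSucc_mk]

lemma insertMax_apply_of_gt {m : ℕ} {p : Fin (m + 1)} (σ : Perm (Fin m)) {i : ℕ} (hi : p < i)
    (him : i ≤ m) : insertMax p σ ⟨i, by omega⟩ = (σ ⟨i - 1, by omega⟩).castSucc := by
  have hle : p ≤ Fin.castSucc ⟨i - 1, by omega⟩ := by
    simp only [Fin.le_def, Fin.val_castSucc]; omega
  have hi' : (⟨i, by omega⟩ : Fin (m + 1)) = Fin.succ ⟨i - 1, by omega⟩ :=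
    Fin.ext (by simp only [Fin.val_succ]; omega)
  rw [← insertMax_apply_succAbove, Fin.succAbove_of_le_castSucc _ _ hle, hi']

/-- The zero on each side makes inserting a maximum at either end of `σ` an insertion strictly
inside the word. -/
def paddedWord {n : ℕ} (σ : Perm (Fin n)) (i : ℕ) : ℕ :=
  if h : i ≠ 0 ∧ i ≤ n then σ ⟨i - 1, by omega⟩ + 1 else 0

lemma paddedWord_lt {n : ℕ} (σ : Perm (Fin n)) (i : ℕ) : paddedWord σ i < n + 1 := by
  unfold paddedWord
  split_ifs <;> omega

lemma descents_paddedWord {n : ℕ} (σ : Perm (Fin (n + 1))) :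
    descents (paddedWord σ) (n + 2) = permDes σ + 1 := by
  have hgap (i : Fin n) :
      paddedWord σ (i + 1 + 1) < paddedWord σ (i + 1) ↔ σ (gapR i) < σ (gapL i) := by
    simp [paddedWord, gapR, gapL]
  have hfirst : ¬paddedWord σ 1 < paddedWord σ 0 := by simp [paddedWord]
  have hlast : paddedWord σ (n + 2) < paddedWord σ (n + 1) := by simp [paddedWord]
  rw [descents_eq_sum, sum_range_succ, sum_range_succ', if_neg hfirst, if_pos hlast,
    ← Fin.sum_univ_eq_sum_range (fun i => if paddedWord σ (i + 1 + 1) < paddedWord σ (i + 1)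
      then 1 else 0), permDes, card_filter]
  simp only [hgap, add_zero]
  rfl

lemma paddedWord_insertMax {m : ℕ} (p : Fin (m + 1)) (σ : Perm (Fin m)) :
    paddedWord (insertMax p σ) = insertAt (paddedWord σ) (p + 1) (m + 1) := by
  funext i
  rcases lt_trichotomy i (p + 1) with hi | rfl | hi
  · rw [insertAt, if_pos hi]
    unfold paddedWord
    split_ifs
    · rw [insertMax_apply_of_lt σ (by omega : i - 1 < p), Fin.val_castSucc]
    all_goals omega
  · simp [paddedWord, insertAt, Fin.is_le]
  · rw [insertAt, if_neg (by omega), if_neg (by omega)]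
    unfold paddedWord
    split_ifs
    · rw [insertMax_apply_of_gt σ (by omega : p < i - 1) (by omega), Fin.val_castSucc]
    all_goals omega

lemma sum_insertMax_permDes {M : Type*} [AddCommMonoid M] (f : ℕ → M) {m : ℕ}
    (σ : Perm (Fin (m + 1))) :
    ∑ p : Fin (m + 2), f (permDes (insertMax p σ))
      = (permDes σ + 1) • f (permDes σ) + (m + 1 - permDes σ) • f (permDes σ + 1) := by
  set u := paddedWord σ
  have hdes : ∀ p : Fin (m + 2),
      permDes (insertMax p σ) = if u (p + 1) < u p then permDes σ else permDes σ + 1 := by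
    intro p
    have h := descents_insertAt (u := u) (k := p + 1) (L := m + 2) (x := m + 2) (by omega)
      (by omega) (paddedWord_lt σ _) (paddedWord_lt σ _)
    rw [← paddedWord_insertMax, descents_paddedWord, descents_paddedWord,
      Nat.add_sub_cancel] at h
    split_ifs at h ⊢ <;> omega
  have hcard : #{p : Fin (m + 2) | u (p + 1) < u p} = permDes σ + 1 := by
    rw [← descents_paddedWord, descents_eq_sum, card_filter,
      ← Fin.sum_univ_eq_sum_range (fun i => if u (i + 1) < u i then 1 else 0)]
  have hcard' : #{p : Fin (m + 2) | ¬u (p + 1) < u p} = m + 1 - permDes σ := by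
    have hsplit :=
      card_filter_add_card_filter_not (s := univ) fun p : Fin (m + 2) => u (p + 1) < u p
    rw [card_univ, Fintype.card_fin] at hsplit
    omega
  simp_rw [hdes, apply_ite f]
  rw [sum_ite, sum_const, sum_const, hcard, hcard']

lemma sum_perm_permDes_succ {M : Type*} [AddCommMonoid M] (f : ℕ → M) (m : ℕ) :
    ∑ τ : Perm (Fin (m + 2)), f (permDes τ)
      = ∑ σ : Perm (Fin (m + 1)),
          ((permDes σ + 1) • f (permDes σ) + (m + 1 - permDes σ) • f (permDes σ + 1)) := by
  rw [← Fintype.sum_bijective _ (insertMax_bijective (m + 1))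
    (fun x => f (permDes (insertMax x.1 x.2))) _ fun _ => rfl, Fintype.sum_prod_type, sum_comm]
  exact sum_congr rfl fun σ _ => sum_insertMax_permDes f σ

lemma natCast_mul_pow_pred_mul {R : Type*} [CommSemiring R] (d : ℕ) (a : R) :
    d * a ^ (d - 1) * a = d * a ^ d := by
  rcases d with _ | d <;> simp [pow_succ, mul_assoc]

lemma alphaF_summand_rec (d e : ℕ) (t q : ℝ) :
    (d + 1) * ((t + q) ^ d * (1 + q) ^ (e + 1)) + (e + 1) * ((t + q) ^ (d + 1) * (1 + q) ^ e)
      = ((d + e) * t * q + (d + e + 1) * t + 2 * q + 1) * ((t + q) ^ d * (1 + q) ^ e)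
        + (t - t ^ 2) * (q + 1) * (d * (t + q) ^ (d - 1) * (1 + q) ^ e)
        + (1 - t) * (q ^ 2 + q)
          * (d * (t + q) ^ (d - 1) * (1 + q) ^ e + (t + q) ^ d * (e * (1 + q) ^ (e - 1))) := by
  linear_combination (-(1 - t) * (q + 1) * (1 + q) ^ e) * natCast_mul_pow_pred_mul d (t + q)
    + (-(1 - t) * q * (t + q) ^ d) * natCast_mul_pow_pred_mul e (1 + q)

/-- the differential recurrence for the polynomials `α_n`. -/
theorem alphaF_diff_rec (n : ℕ) (hn : 2 ≤ n) (t q : ℝ) :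
    alphaF n t q
      = (((n : ℝ) - 2) * t * q + ((n : ℝ) - 1) * t + 2 * q + 1) * alphaF (n - 1) t q
        + (t - t ^ 2) * (q + 1) * deriv (fun s => alphaF (n - 1) s q) t
        + (1 - t) * (q ^ 2 + q) * deriv (fun s => alphaF (n - 1) t s) q := by
  obtain ⟨m, rfl⟩ : ∃ m, n = m + 2 := ⟨n - 2, by omega⟩
  rw [alphaF_eq_sum_perm, sum_perm_permDes_succ (fun k => (t + q) ^ k * (1 + q) ^ (m + 2 - 1 - k)),
    alphaF_eq_sum_perm, deriv_alphaF_t, deriv_alphaF_q, mul_sum, mul_sum, mul_sum,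
    ← sum_add_distrib, ← sum_add_distrib]
  refine sum_congr rfl fun σ _ => ?_
  obtain ⟨e, he⟩ : ∃ e, m = permDes σ + e := ⟨m - permDes σ, by have := permDes_le σ; omega⟩
  generalize permDes σ = d at he ⊢
  subst he
  rw [show d + e + 2 - 1 - d = e + 1 by omega, show d + e + 2 - 1 - (d + 1) = e by omega,
    show d + e + 2 - 1 - 1 - d = e by omega, show d + e + 1 - d = e + 1 by omega]
  push_cast
  linear_combination alphaF_summand_rec d e t q
end

section
/- For n > 0, α_n(t,q) = Σ_{0 ≤ i+j ≤ n−1} t^i (q−t)^j (1−t)^{n−i−j−1} · 2^i · (i+j+1)! · binomial(i+j, j) · S(n, i+j+1), as an identity of polynomials in t and q. -/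
open Finset

def Sur (n m : ℕ) : ℕ :=
  ((univ : Finset (Fin n → Fin m)).filter (fun f => Function.Surjective f)).card

lemma sur_succ_succ (n m : ℕ) :
    Sur (n+1) (m+1) = (m+1) * (Sur n (m+1) + Sur n m) := by
  classical
  have key : ∀ x : Fin (m+1),
      ((univ : Finset (Fin (n+1) → Fin (m+1))).filter
        (fun f => Function.Surjective f ∧ f 0 = x)).card = Sur n (m+1) + Sur n m := by
    intro x
    -- step 1: biject with g : Fin n → Fin (m+1) covering everything except possibly x
    have h1 : ((univ : Finset (Fin (n+1) → Fin (m+1))).filter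
        (fun f => Function.Surjective f ∧ f 0 = x)).card
        = ((univ : Finset (Fin n → Fin (m+1))).filter
        (fun g => ∀ b, b ≠ x → ∃ a, g a = b)).card := by
      refine Finset.card_bij' (fun f _ => Fin.tail f) (fun g _ => Fin.cons x g) ?hi ?hj ?li ?ri
      case hi =>
        intro f hf
        simp only [mem_filter, mem_univ, true_and] at hf ⊢
        intro b hb
        obtain ⟨a, ha⟩ := hf.1 b
        have ha0 : a ≠ 0 := by rintro rfl; exact hb (by rw [← ha, hf.2])
        obtain ⟨a', rfl⟩ := Fin.exists_succ_eq.2 ha0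
        exact ⟨a', ha⟩
      case hj =>
        intro g hg
        simp only [mem_filter, mem_univ, true_and] at hg ⊢
        constructor
        · intro b
          by_cases hb : b = x
          · exact ⟨0, by simp [hb]⟩
          · obtain ⟨a, ha⟩ := hg b hb
            exact ⟨a.succ, by simpa using ha⟩
        · simp
      case li =>
        intro f hf
        simp only [mem_filter, mem_univ, true_and] at hf
        exact (congrArg (fun y : Fin (m+1) => Fin.cons (α := fun _ => Fin (m+1)) y (Fin.tail f)) hf.2.symm).trans (Fin.cons_self_tail f)
      case ri =>
        intro g _
        exact Fin.tail_cons (α := fun _ => Fin (m+1)) x g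
    rw [h1]
    -- step 2: split into surjective / missing x
    have h2 : ((univ : Finset (Fin n → Fin (m+1))).filter
        (fun g => ∀ b, b ≠ x → ∃ a, g a = b))
        = ((univ : Finset (Fin n → Fin (m+1))).filter (fun g => Function.Surjective g))
          ∪ ((univ : Finset (Fin n → Fin (m+1))).filter
              (fun g => (∀ b, b ≠ x → ∃ a, g a = b) ∧ ¬ ∃ a, g a = x)) := by
      ext g
      simp only [mem_filter, mem_univ, true_and, mem_union]
      constructor
      · intro hg
        by_cases hx : ∃ a, g a = x
        · left; intro b
          by_cases hb : b = x
          · exact hb ▸ hx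
          · exact hg b hb
        · right; exact ⟨hg, hx⟩
      · rintro (hg | hg)
        · exact fun b _ => hg b
        · exact hg.1
    have h3 : Disjoint
        ((univ : Finset (Fin n → Fin (m+1))).filter (fun g => Function.Surjective g))
        ((univ : Finset (Fin n → Fin (m+1))).filter
            (fun g => (∀ b, b ≠ x → ∃ a, g a = b) ∧ ¬ ∃ a, g a = x)) := by
      rw [Finset.disjoint_filter]
      intro g _ hg hq
      exact hq.2 (hg x)
    rw [h2, Finset.card_union_of_disjoint h3]
    congr 1
    -- step 3: missing x  ↔  surjections onto Fin m via succAbove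
    symm
    apply Finset.card_bij (fun (g' : Fin n → Fin m) _ => x.succAbove ∘ g')
    · intro g' hg'
      simp only [mem_filter, mem_univ, true_and] at hg' ⊢
      constructor
      · intro b hb
        obtain ⟨c, hc⟩ := Fin.exists_succAbove_eq hb
        obtain ⟨a, ha⟩ := hg' c
        exact ⟨a, by simp [Function.comp, ha, hc]⟩
      · rintro ⟨a, ha⟩
        exact x.succAbove_ne (g' a) ha
    · intro g1 _ g2 _ h
      funext a
      exact Fin.succAbove_right_injective (congrFun h a)
    · intro g hg
      simp only [mem_filter, mem_univ, true_and] at hg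
      have hne : ∀ a, g a ≠ x := fun a ha => hg.2 ⟨a, ha⟩
      have hch : ∀ a, ∃ c, x.succAbove c = g a := fun a => Fin.exists_succAbove_eq (hne a)
      refine ⟨fun a => (hch a).choose, ?_, ?_⟩
      · simp only [mem_filter, mem_univ, true_and]
        intro c
        obtain ⟨a, ha⟩ := hg.1 (x.succAbove c) (x.succAbove_ne c)
        exact ⟨a, Fin.succAbove_right_injective (by rw [(hch a).choose_spec, ha])⟩
      · funext a
        exact (hch a).choose_spec
  have hfib : Sur (n+1) (m+1) = ∑ x : Fin (m+1),
      ((univ : Finset (Fin (n+1) → Fin (m+1))).filter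
        (fun f => Function.Surjective f ∧ f 0 = x)).card := by
    unfold Sur
    rw [Finset.card_eq_sum_card_fiberwise (f := fun f => f 0) (t := univ) (fun _ _ => mem_univ _)]
    apply Finset.sum_congr rfl
    intro x _
    congr 1
    rw [Finset.filter_filter]
  rw [hfib]
  simp only [key, Finset.sum_const, Finset.card_univ, Fintype.card_fin, smul_eq_mul]

lemma sur_eq_stirling (n m : ℕ) : Sur n m = m.factorial * stirling n m := by
  induction n generalizing m with
  | zero =>
    match m with
    | 0 =>
      unfold Sur
      rw [Finset.filter_true_of_mem (fun f _ => (fun b => b.elim0 : ∀ b : Fin 0, ∃ a, f a = b))]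
      rw [Finset.card_univ]
      simp [stirling]
    | m+1 =>
      unfold Sur
      rw [Finset.filter_false_of_mem (fun f _ hf => (hf 0).choose.elim0)]
      simp [stirling]
  | succ n ih =>
    match m with
    | 0 =>
      unfold Sur
      rw [Finset.filter_false_of_mem (fun f _ _ => (f 0).elim0)]
      simp [stirling]
    | m+1 =>
      rw [sur_succ_succ, ih, ih, show stirling (n+1) (m+1) = (m + 1) * stirling n (m + 1) + stirling n m from rfl]
      rw [Nat.factorial_succ]
      ring

def cnt {n : ℕ} (W : Finset (Fin (n-1))) (k : Fin n) : ℕ :=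
  (univ.filter (fun i : Fin (n-1) => i.1 < k.1 ∧ i ∉ W)).card

lemma cnt_zero {n : ℕ} (W : Finset (Fin (n-1))) (k : Fin n) (hk : k.1 = 0) :
    cnt W k = 0 := by
  unfold cnt
  rw [Finset.card_eq_zero, Finset.filter_eq_empty_iff]
  intro i _
  simp [hk]

lemma cnt_mono {n : ℕ} (W : Finset (Fin (n-1))) {k k' : Fin n} (h : k.1 ≤ k'.1) :
    cnt W k ≤ cnt W k' := by
  apply Finset.card_le_card
  intro i hi
  simp only [mem_filter, mem_univ, true_and] at hi ⊢
  exact ⟨by omega, hi.2⟩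

lemma cnt_succ {n : ℕ} (W : Finset (Fin (n-1))) (i : Fin (n-1)) :
    cnt W (gapR i) = cnt W (gapL i) + (if i ∈ W then 0 else 1) := by
  classical
  unfold cnt gapL gapR
  have hsplit : (univ.filter (fun i' : Fin (n-1) => i'.1 < i.1 + 1 ∧ i' ∉ W))
      = (univ.filter (fun i' : Fin (n-1) => i'.1 < i.1 ∧ i' ∉ W))
        ∪ (univ.filter (fun i' : Fin (n-1) => i' = i ∧ i ∉ W)) := by
    ext i'
    simp only [mem_filter, mem_univ, true_and, mem_union]
    constructor
    · rintro ⟨hlt, hw⟩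
      rcases Nat.lt_succ_iff_lt_or_eq.1 hlt with h | h
      · exact Or.inl ⟨h, hw⟩
      · have : i' = i := Fin.ext h
        exact Or.inr ⟨this, this ▸ hw⟩
    · rintro (⟨hlt, hw⟩ | ⟨rfl, hw⟩)
      · exact ⟨by omega, hw⟩
      · exact ⟨by omega, hw⟩
  rw [show ((⟨i.1+1, by have := i.2; omega⟩ : Fin n)).1 = i.1 + 1 from rfl]
  rw [show ((⟨i.1, by have := i.2; omega⟩ : Fin n)).1 = i.1 from rfl] at *
  rw [hsplit, Finset.card_union_of_disjoint]
  · congr 1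
    by_cases hw : i ∈ W
    · simp [hw]
    · simp only [hw, if_false, not_false_iff, and_true]
      rw [Finset.filter_eq']
      simp
  · rw [Finset.disjoint_filter]
    rintro i' _ ⟨hlt, _⟩ ⟨rfl, _⟩
    omega

lemma cnt_last {n : ℕ} (W : Finset (Fin (n-1))) (k : Fin n) (hk : k.1 = n - 1) :
    cnt W k = (n-1) - W.card := by
  classical
  unfold cnt
  have : (univ.filter (fun i : Fin (n-1) => i.1 < k.1 ∧ i ∉ W))
      = univ.filter (fun i : Fin (n-1) => i ∉ W) := by
    apply Finset.filter_congr
    intro i _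
    have := i.2
    simp only [hk, and_iff_right_iff_imp]
    intro _; omega
  rw [this]
  have h2 := Finset.card_filter_add_card_filter_not
    (s := (univ : Finset (Fin (n-1)))) (fun i => i ∈ W)
  have h3 : (univ.filter (fun i : Fin (n-1) => i ∈ W)).card = W.card := by
    congr 1; simp [Finset.filter_mem_eq_inter]
  simp only [Finset.card_univ, Fintype.card_fin] at h2
  have hW : W.card ≤ n - 1 := by
    calc W.card ≤ (univ : Finset (Fin (n-1))).card := Finset.card_le_card (subset_univ W)
    _ = n - 1 := by simp
  omega

lemma cnt_lt_m {n m : ℕ} (W : Finset (Fin (n-1))) (hn : 0 < n) (hm : 0 < m) (hmn : m ≤ n)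
    (hcard : W.card = n - m) (k : Fin n) : cnt W k < m := by
  have h1 : cnt W k ≤ cnt W ⟨n-1, by omega⟩ := cnt_mono W (by have := k.2; simp; omega)
  rw [cnt_last W ⟨n-1, by omega⟩ rfl, hcard] at h1
  omega

/-- the sorting key -/

def key {n m : ℕ} (f : Fin n → Fin m) (x : Fin n) : ℕ := n * (f x).1 + x.1

lemma key_inj {n m : ℕ} (f : Fin n → Fin m) : Function.Injective (key f) := by
  intro x y h
  unfold key at h
  have hx : x.1 = y.1 := by
    have := congrArg (· % n) h
    simpa [Nat.mul_add_mod, Nat.mod_eq_of_lt x.2, Nat.mod_eq_of_lt y.2] using this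
  exact Fin.ext hx

lemma key_fst {n m : ℕ} (f : Fin n → Fin m) (hn : 0 < n) (x : Fin n) :
    key f x / n = (f x).1 := by
  unfold key
  rw [Nat.mul_add_div hn, Nat.div_eq_of_lt x.2, add_zero]

lemma key_lt_of_eq {n m : ℕ} (f : Fin n → Fin m) {x y : Fin n}
    (hf : f x = f y) (hxy : x < y) : key f x < key f y := by
  unfold key
  rw [hf]
  exact Nat.add_lt_add_left hxy _

lemma key_lt_of_fst_lt {n m : ℕ} (f : Fin n → Fin m) {x y : Fin n}
    (hf : (f x).1 < (f y).1) : key f x < key f y := by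
  unfold key
  calc n * (f x).1 + x.1 < n * (f x).1 + n := by have := x.2; omega
  _ = n * ((f x).1 + 1) := by ring
  _ ≤ n * (f y).1 := Nat.mul_le_mul_left n hf
  _ ≤ n * (f y).1 + y.1 := Nat.le_add_right _ _

lemma key_snd_lt {n m : ℕ} (f : Fin n → Fin m) {x y : Fin n}
    (hf : f x = f y) (h : key f x < key f y) : x < y := by
  unfold key at h
  rw [hf] at h
  have : x.1 < y.1 := by omega
  exact this

lemma strict_aux (σ : Equiv.Perm (Fin (N+1))) (W : Finset (Fin (N+1-1)))
    (hasc : ∀ i ∈ W, ¬ σ (gapR i) < σ (gapL i))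
    (f : Fin (N+1) → Fin m) (hf : ∀ k, (f (σ k)).1 = cnt W k) :
    StrictMono (key f ∘ σ) := by
  rw [Fin.strictMono_iff_lt_succ]
  intro i
  let i' : Fin (N+1-1) := i
  have hcast : Fin.castSucc i = gapL (n := N+1) i' := by
    apply Fin.ext; rfl
  have hsucc : Fin.succ i = gapR (n := N+1) i' := by
    apply Fin.ext; rfl
  simp only [Function.comp_apply, hcast, hsucc]
  have hstep := cnt_succ W i'
  by_cases hiW : i' ∈ W
  · apply key_lt_of_eq
    · apply Fin.ext
      rw [hf (gapL i'), hf (gapR i'), hstep]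
      simp [hiW]
    · have hle : σ (gapL i') ≤ σ (gapR i') := le_of_not_gt (hasc i' hiW)
      have hne : σ (gapL i') ≠ σ (gapR i') := by
        intro h
        have := σ.injective h
        have : (gapL i').1 = (gapR i').1 := congrArg Fin.val this
        simp [gapL, gapR] at this
      exact lt_of_le_of_ne hle hne
  · apply key_lt_of_fst_lt
    rw [hf (gapL i'), hf (gapR i'), hstep]
    simp [hiW]

lemma pairs_card_eq_sur (N m : ℕ) (hm : 0 < m) (hmn : m ≤ N+1) :
    ((univ : Finset (SegPerm (N+1))).filter
      (fun p => (∀ i ∈ p.2, ¬ p.1 (gapR i) < p.1 (gapL i)) ∧ p.2.card = (N+1) - m)).card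
    = Sur (N+1) m := by
  classical
  have hbound : ∀ p : SegPerm (N+1), p ∈ ((univ : Finset (SegPerm (N+1))).filter
      (fun p => (∀ i ∈ p.2, ¬ p.1 (gapR i) < p.1 (gapL i)) ∧ p.2.card = (N+1) - m)) →
      ∀ x : Fin (N+1), cnt p.2 (p.1.symm x) < m := by
    intro p hp x
    rw [mem_filter] at hp
    exact cnt_lt_m p.2 (by omega) hm hmn hp.2.2 _
  unfold Sur
  apply Finset.card_bij
    (fun p hp => (fun x => (⟨cnt p.2 (p.1.symm x), hbound p hp x⟩ : Fin m)))
  · -- maps into surjections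
    intro p hp
    simp only [mem_filter, mem_univ, true_and] at hp ⊢
    obtain ⟨hasc, hcard⟩ := hp
    have exists_cnt : ∀ c, c < m → ∃ k : Fin (N+1), cnt p.2 k = c := by
      intro c
      induction c with
      | zero => exact fun _ => ⟨⟨0, by omega⟩, cnt_zero p.2 _ rfl⟩
      | succ c ih =>
        intro hc
        obtain ⟨k, hk⟩ := ih (by omega)
        have hkA : k ∈ univ.filter (fun k' : Fin (N+1) => cnt p.2 k' = c) := by
          simp [hk]
        have hAne : (univ.filter (fun k' : Fin (N+1) => cnt p.2 k' = c)).Nonempty := ⟨k, hkA⟩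
        obtain ⟨K, hKA, hKmax⟩ : ∃ K ∈ univ.filter (fun k' : Fin (N+1) => cnt p.2 k' = c),
            ∀ k' ∈ univ.filter (fun k' : Fin (N+1) => cnt p.2 k' = c), k' ≤ K :=
          ⟨_, Finset.max'_mem _ hAne, fun k' hk' => Finset.le_max' _ k' hk'⟩
        have hKc : cnt p.2 K = c := by simpa using hKA
        have hKlt : K.1 < N := by
          by_contra hcon
          have hKN : K.1 = N :=
            Nat.le_antisymm (Nat.lt_succ_iff.mp K.2) (Nat.le_of_not_lt hcon)
          have hcl : cnt p.2 K = (N+1-1) - p.2.card :=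
            cnt_last p.2 K (hKN.trans (by omega))
          rw [hcard, hKc] at hcl
          have hfin : c = (N+1-1) - (N+1-m) := hcl
          clear hcl hKc hKA hKmax hAne hkA hk ih hasc hcard hbound
          omega
        have hstep := cnt_succ p.2 (⟨K.1, hKlt⟩ : Fin (N+1-1))
        have hgl : gapL (n := N+1) ⟨K.1, hKlt⟩ = K := by apply Fin.ext; rfl
        rw [hgl, hKc] at hstep
        by_cases hiW : (⟨K.1, hKlt⟩ : Fin (N+1-1)) ∈ p.2
        · exfalso
          have hmem : gapR (n := N+1) ⟨K.1, hKlt⟩ ∈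
              univ.filter (fun k' : Fin (N+1) => cnt p.2 k' = c) := by
            simp only [mem_filter, mem_univ, true_and]
            rw [hstep]
            simp [hiW]
          have hle := hKmax _ hmem
          have hle' : (gapR (n := N+1) ⟨K.1, hKlt⟩).1 ≤ K.1 := hle
          simp [gapR] at hle'
        · refine ⟨gapR ⟨K.1, hKlt⟩, ?_⟩
          rw [hstep]
          simp [hiW]
    intro b
    obtain ⟨k, hk⟩ := exists_cnt b.1 b.2
    exact ⟨p.1 k, by apply Fin.ext; simpa using hk⟩
  · -- injective
    intro p₁ hp₁ p₂ hp₂ heq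
    have hp₁' := hp₁; have hp₂' := hp₂
    simp only [mem_filter, mem_univ, true_and] at hp₁' hp₂'
    set f := (fun x => (⟨cnt p₁.2 (p₁.1.symm x), hbound p₁ hp₁ x⟩ : Fin m)) with hfdef
    have hfval₁ : ∀ k, (f (p₁.1 k)).1 = cnt p₁.2 k := by
      intro k; simp [hfdef]
    have hfval₂ : ∀ k, (f (p₂.1 k)).1 = cnt p₂.2 k := by
      intro k
      rw [heq]
      simp
    have hsm₁ := strict_aux p₁.1 p₁.2 hp₁'.1 f hfval₁
    have hsm₂ := strict_aux p₂.1 p₂.2 hp₂'.1 f hfval₂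
    have hsort : ∀ (σ : Equiv.Perm (Fin (N+1))), StrictMono (key f ∘ σ) →
        σ = Tuple.sort (key f) := by
      intro σ hsm
      rw [Tuple.eq_sort_iff]
      refine ⟨hsm.monotone, fun i j hij hk => ?_⟩
      exact absurd (σ.injective (key_inj f hk)) (by omega)
    have hσ : p₁.1 = p₂.1 := (hsort _ hsm₁).trans (hsort _ hsm₂).symm
    have hW : p₁.2 = p₂.2 := by
      ext i
      have h₁ := cnt_succ p₁.2 i
      have h₂ := cnt_succ p₂.2 i
      have e₁ : (f (p₁.1 (gapR i))).1 = cnt p₁.2 (gapR i) := hfval₁ _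
      have e₂ : (f (p₁.1 (gapL i))).1 = cnt p₁.2 (gapL i) := hfval₁ _
      have e₃ : (f (p₂.1 (gapR i))).1 = cnt p₂.2 (gapR i) := hfval₂ _
      have e₄ : (f (p₂.1 (gapL i))).1 = cnt p₂.2 (gapL i) := hfval₂ _
      rw [← hσ] at e₃ e₄
      constructor
      · intro hi
        -- cnt p₁ equal at gap, so cnt p₂ equal at gap, so i ∈ p₂.2
        by_contra hi₂
        simp [hi] at h₁
        simp [hi₂] at h₂
        omega
      · intro hi
        by_contra hi₁
        simp [hi] at h₂
        simp [hi₁] at h₁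
        omega
    exact Prod.ext hσ hW
  · -- surjective
    intro f hf
    simp only [mem_filter, mem_univ, true_and] at hf
    set σ := Tuple.sort (key f) with hσdef
    set W : Finset (Fin (N+1-1)) :=
      univ.filter (fun i => f (σ (gapR i)) = f (σ (gapL i))) with hWdef
    have hmono : Monotone (key f ∘ σ) := Tuple.monotone_sort (key f)
    have hsm : StrictMono (key f ∘ σ) :=
      hmono.strictMono_of_injective ((key_inj f).comp σ.injective)
    have hfm : ∀ a b : Fin (N+1), a ≤ b → (f (σ a)).1 ≤ (f (σ b)).1 := by
      intro a b hab
      have h := hmono hab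
      simp only [Function.comp_apply] at h
      have h2 := Nat.div_le_div_right (c := N+1) h
      rwa [key_fst f (by omega), key_fst f (by omega)] at h2
    have h0 : ∀ (h00 : (0:ℕ) < N+1), (f (σ ⟨0, h00⟩)).1 = 0 := by
      intro h00
      obtain ⟨k0, hk0⟩ := hf ⟨0, hm⟩
      have hv : (f (σ (σ.symm k0))).1 = 0 := by
        rw [Equiv.apply_symm_apply, hk0]
      have hle := hfm ⟨0, h00⟩ (σ.symm k0) (by
        rw [Fin.le_def]; exact Nat.zero_le _)
      omega
    have hstep1 : ∀ i : Fin (N+1-1),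
        (f (σ (gapR i))).1 ≤ (f (σ (gapL i))).1 + 1 := by
      intro i
      by_contra hcon
      push_neg at hcon
      have hcm : (f (σ (gapL i))).1 + 1 < m := lt_trans hcon (f (σ (gapR i))).2
      obtain ⟨k0, hk0⟩ := hf ⟨(f (σ (gapL i))).1 + 1, hcm⟩
      set k := σ.symm k0 with hkdef
      have hkv : (f (σ k)).1 = (f (σ (gapL i))).1 + 1 := by
        rw [hkdef, Equiv.apply_symm_apply, hk0]
      rcases le_or_gt k.1 (gapL (n := N+1) i).1 with h | h
      · have h2 := hfm k (gapL i) h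
        omega
      · have h3 : (gapR (n := N+1) i) ≤ k := by
          rw [Fin.le_def]
          show i.1 + 1 ≤ k.1
          exact h
        have h4 := hfm (gapR i) k h3
        omega
    have hL : ∀ K (hK : K < N+1), (f (σ ⟨K, hK⟩)).1 = cnt W ⟨K, hK⟩ := by
      intro K
      induction K with
      | zero => intro hK; rw [cnt_zero W _ rfl]; exact h0 hK
      | succ K ih =>
        intro hK
        have hKN : K < N := by omega
        set i : Fin (N+1-1) := ⟨K, hKN⟩ with hidef
        have hgl : gapL (n := N+1) i = ⟨K, by omega⟩ := by apply Fin.ext; rfl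
        have hgr : gapR (n := N+1) i = ⟨K+1, hK⟩ := by apply Fin.ext; rfl
        have hstep := cnt_succ W i
        rw [hgl, hgr] at hstep
        rw [hstep, ← ih (by omega)]
        by_cases hiW : i ∈ W
        · have heq : f (σ (gapR i)) = f (σ (gapL i)) := by
            simpa [hWdef] using hiW
          rw [hgl, hgr] at heq
          rw [heq]
          simp [hiW]
        · have hne : f (σ (gapR i)) ≠ f (σ (gapL i)) := by
            intro hcon
            exact hiW (by simp [hWdef, hcon])
          have hle := hfm (gapL i) (gapR i) (by
            rw [Fin.le_def]; show i.1 ≤ i.1 + 1; omega)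
          have hs1 := hstep1 i
          have hval : (f (σ (gapR i))).1 = (f (σ (gapL i))).1 + 1 := by
            rcases lt_or_eq_of_le hle with h | h
            · omega
            · exact absurd (Fin.ext h.symm) hne
          rw [hgl, hgr] at hval
          rw [hval]
          simp [hiW]
    have hlast : ∀ (hNN : N < N+1), (f (σ ⟨N, hNN⟩)).1 = m - 1 := by
      intro hNN
      obtain ⟨k0, hk0⟩ := hf ⟨m-1, by omega⟩
      have h1 : (f (σ (σ.symm k0))).1 = m - 1 := by
        rw [Equiv.apply_symm_apply, hk0]
      have h2 := hfm (σ.symm k0) ⟨N, hNN⟩ (by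
        rw [Fin.le_def]; have := (σ.symm k0).2; show _ ≤ N; omega)
      have h3 := (f (σ ⟨N, hNN⟩)).2
      omega
    have hcard : W.card = (N+1) - m := by
      have h1 := hL N (by omega)
      rw [cnt_last W ⟨N, by omega⟩ rfl, hlast (by omega)] at h1
      have hWle : W.card ≤ N := by
        calc W.card ≤ (univ : Finset (Fin (N+1-1))).card := card_le_card (subset_univ W)
        _ = N := by simp
      omega
    have hasc : ∀ i ∈ W, ¬ σ (gapR i) < σ (gapL i) := by
      intro i hiW
      have heqf : f (σ (gapR i)) = f (σ (gapL i)) := by simpa [hWdef] using hiW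
      have hklt : key f (σ (gapL i)) < key f (σ (gapR i)) := by
        have := hsm (a := gapL (n := N+1) i) (b := gapR i) (by
          show (gapL (n := N+1) i).1 < (gapR (n := N+1) i).1
          simp [gapL, gapR])
        exact this
      have := key_snd_lt f heqf.symm hklt
      exact asymm this
    refine ⟨(σ, W), ?_, ?_⟩
    · simp only [mem_filter, mem_univ, true_and]
      exact ⟨hasc, hcard⟩
    · funext x
      apply Fin.ext
      show cnt W (σ.symm x) = (f x).1
      have := hL (σ.symm x).1 (σ.symm x).2
      simp only [Fin.eta] at this
      rw [← this]
      simp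

lemma alpha_eq (n : ℕ) (t q : ℝ) :
    alphaF n t q
      = ∑ σ : Equiv.Perm (Fin n), (t+q) ^ permDes σ * (1+q) ^ ((n-1) - permDes σ) := by
  classical
  unfold alphaF
  rw [Fintype.sum_prod_type]
  apply Finset.sum_congr rfl
  intro σ _
  set D : Fin (n-1) → Prop := fun i => σ (gapR i) < σ (gapL i) with hD
  have step1 : ∀ S : Finset (Fin (n-1)),
      t ^ desNum (σ, S) * q ^ segNum (σ, S)
        = (∏ _i ∈ S, q) * ∏ i ∈ univ \ S, (if D i then t else 1) := by
    intro S
    have hset : univ.filter (fun i : Fin (n-1) => i ∉ S ∧ σ (gapR i) < σ (gapL i))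
        = (univ \ S).filter D := by
      ext i
      simp only [mem_filter, mem_univ, true_and, mem_sdiff, hD]
    have h1 : t ^ desNum (σ, S) = ∏ i ∈ univ \ S, (if D i then t else 1) := by
      rw [show desNum (σ, S) = ((univ \ S).filter D).card from by rw [desNum]; exact congrArg _ hset]
      rw [← Finset.prod_const, Finset.prod_filter]
    have h2 : q ^ segNum (σ, S) = ∏ _i ∈ S, q := by
      rw [segNum, Finset.prod_const]
    rw [h1, h2]; ring
  calc (∑ S : Finset (Fin (n-1)), t ^ desNum (σ, S) * q ^ segNum (σ, S))
      = ∑ S ∈ (univ : Finset (Fin (n-1))).powerset,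
          (∏ _i ∈ S, q) * ∏ i ∈ univ \ S, (if D i then t else 1) := by
        rw [Finset.powerset_univ]
        exact Finset.sum_congr rfl (fun S _ => step1 S)
    _ = ∏ i : Fin (n-1), (q + if D i then t else 1) := (Finset.prod_add _ _ _).symm
    _ = ∏ i : Fin (n-1), (if D i then q + t else q + 1) := by
        apply Finset.prod_congr rfl; intro i _; split <;> rfl
    _ = (∏ _i ∈ univ.filter D, (q+t)) * ∏ _i ∈ univ.filter (fun i => ¬ D i), (q+1) :=
        Finset.prod_ite _ _
    _ = (q+t) ^ permDes σ * (q+1) ^ ((univ.filter (fun i => ¬ D i)).card) := by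
        rw [Finset.prod_const, Finset.prod_const]; rfl
    _ = (t+q) ^ permDes σ * (1+q) ^ ((n-1) - permDes σ) := by
        have hc : permDes σ + (univ.filter (fun i => ¬ D i)).card = n - 1 := by
          have := Finset.card_filter_add_card_filter_not (s := (univ : Finset (Fin (n-1)))) D
          simpa [permDes, hD] using this
        have : (univ.filter (fun i => ¬ D i)).card = (n-1) - permDes σ := by omega
        rw [this, add_comm q t, add_comm q 1]

lemma sum_tri {M : Type*} [AddCommMonoid M] (n : ℕ) (G : ℕ → ℕ → M) :
    ∑ i ∈ range n, ∑ j ∈ range (n - i), G i j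
      = ∑ k ∈ range n, ∑ j ∈ range (k+1), G (k-j) j := by
  rw [Finset.sum_sigma' (range n) (fun i => range (n - i)) (fun i j => G i j),
      Finset.sum_sigma' (range n) (fun k => range (k+1)) (fun k j => G (k-j) j)]
  apply Finset.sum_nbij' (i := fun p => (⟨p.1 + p.2, p.2⟩ : Σ _ : ℕ, ℕ))
    (j := fun p => (⟨p.1 - p.2, p.2⟩ : Σ _ : ℕ, ℕ))
  · rintro ⟨a, b⟩ hab
    simp only [mem_sigma, mem_range] at hab ⊢
    omega
  · rintro ⟨a, b⟩ hab
    simp only [mem_sigma, mem_range] at hab ⊢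
    omega
  · rintro ⟨a, b⟩ hab
    simp only [mem_sigma, mem_range] at hab
    have : a + b - b = a := by omega
    simp [this]
  · rintro ⟨a, b⟩ hab
    simp only [mem_sigma, mem_range] at hab
    have : a - b + b = a := by omega
    simp [this]
  · rintro ⟨a, b⟩ hab
    simp only [mem_sigma, mem_range] at hab
    have : a + b - b = a := by omega
    simp [this]

lemma group_sum (N : ℕ) (u w : ℝ) :
    ∑ σ : Equiv.Perm (Fin (N+1)), u ^ permDes σ * (u+w) ^ ((N+1-1) - permDes σ)
      = ∑ j ∈ range (N+1),
          (((univ : Finset (SegPerm (N+1))).filter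
            (fun p => (∀ i ∈ p.2, ¬ p.1 (gapR i) < p.1 (gapL i)) ∧ p.2.card = j)).card : ℝ)
            * (u ^ (N - j) * w ^ j) := by
  classical
  have stepA : ∀ σ : Equiv.Perm (Fin (N+1)),
      u ^ permDes σ * (u+w) ^ ((N+1-1) - permDes σ)
        = ∑ W ∈ (univ.filter (fun i : Fin (N+1-1) =>
            ¬ σ (gapR i) < σ (gapL i))).powerset, u ^ (N - W.card) * w ^ W.card := by
    intro σ
    set A := univ.filter (fun i : Fin (N+1-1) => ¬ σ (gapR i) < σ (gapL i)) with hA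
    have hcards : permDes σ + A.card = N := by
      have := Finset.card_filter_add_card_filter_not
        (s := (univ : Finset (Fin (N+1-1))))
        (fun i => σ (gapR i) < σ (gapL i))
      simp only [Finset.card_univ, Fintype.card_fin] at this
      rw [permDes, hA]
      exact this
    have h1 : (N+1-1) - permDes σ = A.card := by omega
    rw [h1]
    have h2 : (u+w) ^ A.card = ∏ _i ∈ A, (w + u) := by
      rw [Finset.prod_const, add_comm u w]
    rw [h2, Finset.prod_add, Finset.mul_sum]
    apply Finset.sum_congr rfl
    intro W hW
    rw [Finset.mem_powerset] at hW
    rw [Finset.prod_const, Finset.prod_const, Finset.card_sdiff_of_subset hW]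
    have hWle : W.card ≤ A.card := Finset.card_le_card hW
    rw [show u ^ permDes σ * (w ^ W.card * u ^ (A.card - W.card))
        = u ^ (permDes σ + (A.card - W.card)) * w ^ W.card from by rw [pow_add]; ring]
    congr 2
    omega
  rw [Finset.sum_congr rfl (fun σ _ => stepA σ)]
  -- convert double sum into sum over filtered product
  have stepB : ∑ σ : Equiv.Perm (Fin (N+1)),
      ∑ W ∈ (univ.filter (fun i : Fin (N+1-1) =>
          ¬ σ (gapR i) < σ (gapL i))).powerset, u ^ (N - W.card) * w ^ W.card
      = ∑ p ∈ (univ : Finset (SegPerm (N+1))).filter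
          (fun p => ∀ i ∈ p.2, ¬ p.1 (gapR i) < p.1 (gapL i)),
            u ^ (N - p.2.card) * w ^ p.2.card := by
    rw [Finset.sum_filter, Fintype.sum_prod_type]
    apply Finset.sum_congr rfl
    intro σ _
    have hps : (univ.filter (fun i : Fin (N+1-1) => ¬ σ (gapR i) < σ (gapL i))).powerset
        = univ.filter (fun W : Finset (Fin (N+1-1)) =>
            ∀ i ∈ W, ¬ σ (gapR i) < σ (gapL i)) := by
      ext W
      simp only [Finset.mem_powerset, Finset.subset_iff, mem_filter, mem_univ, true_and]
    rw [hps, Finset.sum_filter]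
  rw [stepB]
  -- group by number of bars
  rw [← Finset.sum_fiberwise_of_maps_to (g := fun p : SegPerm (N+1) => p.2.card)
      (t := range (N+1)) (fun p _ => by
        show p.2.card ∈ range (N+1)
        rw [mem_range]
        have : p.2.card ≤ (univ : Finset (Fin (N+1-1))).card :=
          Finset.card_le_card (subset_univ _)
        simp only [Finset.card_univ, Fintype.card_fin] at this
        omega)]
  apply Finset.sum_congr rfl
  intro j hj
  rw [Finset.filter_filter]
  have hcg : ∀ p ∈ (univ : Finset (SegPerm (N+1))).filter
      (fun p => (∀ i ∈ p.2, ¬ p.1 (gapR i) < p.1 (gapL i)) ∧ p.2.card = j),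
      u ^ (N - p.2.card) * w ^ p.2.card = u ^ (N - j) * w ^ j := by
    intro p hp
    rw [mem_filter] at hp
    rw [hp.2.2]
  rw [Finset.sum_congr rfl hcg, Finset.sum_const, nsmul_eq_mul]

/-- the expansion of `α_n(t,q)` in terms of Stirling numbers. -/
theorem alphaF_stirling_expansion (n : ℕ) (hn : 0 < n) (t q : ℝ) :
    alphaF n t q
      = ∑ i ∈ Finset.range n, ∑ j ∈ Finset.range (n - i),
          t ^ i * (q - t) ^ j * (1 - t) ^ (n - i - j - 1) * 2 ^ i
            * (Nat.factorial (i + j + 1) : ℝ) * (Nat.choose (i + j) j : ℝ)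
            * (stirling n (i + j + 1) : ℝ) := by
  classical
  obtain ⟨N, rfl⟩ : ∃ N, n = N + 1 := ⟨n - 1, by omega⟩
  rw [alpha_eq]
  simp only [show (1:ℝ) + q = (t+q) + (1-t) from by ring]
  rw [group_sum N (t+q) (1-t)]
  -- the middle form
  have lhs_eq : ∑ j ∈ range (N+1),
      (((univ : Finset (SegPerm (N+1))).filter
        (fun p => (∀ i ∈ p.2, ¬ p.1 (gapR i) < p.1 (gapL i)) ∧ p.2.card = j)).card : ℝ)
        * ((t+q) ^ (N - j) * (1-t) ^ j)
      = ∑ j ∈ range (N+1),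
          (((N+1-j).factorial * stirling (N+1) (N+1-j) : ℕ) : ℝ)
            * ((t+q) ^ (N - j) * (1-t) ^ j) := by
    apply Finset.sum_congr rfl
    intro j hj
    rw [mem_range] at hj
    have h := pairs_card_eq_sur N (N+1-j) (by omega) (by omega)
    rw [show (N+1) - (N+1-j) = j from by omega] at h
    rw [h, sur_eq_stirling]
  rw [lhs_eq]
  -- now the right-hand side
  rw [sum_tri (N+1) (fun i j => t ^ i * (q - t) ^ j * (1 - t) ^ (N + 1 - i - j - 1) * 2 ^ i
      * (Nat.factorial (i + j + 1) : ℝ) * (Nat.choose (i + j) j : ℝ)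
      * (stirling (N+1) (i + j + 1) : ℝ))]
  have rhs_eq : ∀ k ∈ range (N+1),
      (∑ j ∈ range (k+1), t ^ (k-j) * (q - t) ^ j * (1 - t) ^ (N + 1 - (k-j) - j - 1)
        * 2 ^ (k-j) * (Nat.factorial ((k-j) + j + 1) : ℝ) * (Nat.choose ((k-j) + j) j : ℝ)
        * (stirling (N+1) ((k-j) + j + 1) : ℝ))
      = (((k+1).factorial * stirling (N+1) (k+1) : ℕ) : ℝ) * ((t+q) ^ k * (1-t) ^ (N - k)) := by
    intro k hk
    rw [mem_range] at hk
    have step : ∀ j ∈ range (k+1),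
        t ^ (k-j) * (q - t) ^ j * (1 - t) ^ (N + 1 - (k-j) - j - 1)
          * 2 ^ (k-j) * (Nat.factorial ((k-j) + j + 1) : ℝ) * (Nat.choose ((k-j) + j) j : ℝ)
          * (stirling (N+1) ((k-j) + j + 1) : ℝ)
        = ((1-t) ^ (N-k) * (Nat.factorial (k+1) : ℝ) * (stirling (N+1) (k+1) : ℝ))
            * ((q - t) ^ j * (2*t) ^ (k-j) * (Nat.choose k j : ℝ)) := by
      intro j hj
      rw [mem_range] at hj
      rw [show (k-j) + j = k from by omega, show N + 1 - (k-j) - j - 1 = N - k from by omega,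
        mul_pow]
      ring
    rw [Finset.sum_congr rfl step, ← Finset.mul_sum, ← add_pow]
    rw [show q - t + 2*t = t + q from by ring]
    push_cast
    ring
  rw [Finset.sum_congr rfl rhs_eq]
  rw [← Finset.sum_range_reflect (fun k => (((k+1).factorial * stirling (N+1) (k+1) : ℕ) : ℝ)
      * ((t+q) ^ k * (1-t) ^ (N - k))) (N+1)]
  apply Finset.sum_congr rfl
  intro j hj
  rw [mem_range] at hj
  rw [show N + 1 - 1 - j = N - j from by omega]
  rw [show N - j + 1 = N + 1 - j from by omega, show N - (N - j) = j from by omega]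
end
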